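/- arXiv:1012.4391 — 13 statements merged into one kernel-verified Lean document; each statement's English description precedes it below -/
import Mathlib

section
/- Let X, Y, Z be complex Hilbert spaces, ι : X → Z a compact bounded linear map, and C > 0. Let T_j (j ∈ ℕ) and T₀ be bounded linear operators X → Y such that ‖T_j − T₀‖ → 0 in operator norm and such that ‖u‖_X ≤ C(‖T_j u‖_Y + ‖ιu‖_Z) holds for all u ∈ X and all j. If for every j there exists u_j ≠ 0 with T_j u_j = 0, then there exists u₀ ≠ 0 with T₀ u₀ = 0. -/
/-- **Stability of triviality of the kernel under norm perturbations, given a uniform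
estimate with compact error term.**
If `ι : X → Z` is compact, `T_j → T₀` in operator norm, the uniform estimate
`‖u‖ ≤ C(‖T_j u‖ + ‖ιu‖)` holds for all `u` and `j`, and each `T_j` has nontrivial
kernel, then `T₀` has nontrivial kernel. -/
theorem exists_nonzero_kernel_of_limit
    {X Y Z : Type*}
    [NormedAddCommGroup X] [InnerProductSpace ℂ X] [CompleteSpace X]
    [NormedAddCommGroup Y] [InnerProductSpace ℂ Y] [CompleteSpace Y]
    [NormedAddCommGroup Z] [InnerProductSpace ℂ Z] [CompleteSpace Z]
    (ι : X →L[ℂ] Z) (hι : IsCompactOperator ι)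
    (C : ℝ) (hC : 0 < C)
    (T : ℕ → X →L[ℂ] Y) (T₀ : X →L[ℂ] Y)
    (hconv : Filter.Tendsto (fun j => ‖T j - T₀‖) Filter.atTop (nhds 0))
    (hest : ∀ (j : ℕ) (u : X), ‖u‖ ≤ C * (‖(T j) u‖ + ‖ι u‖))
    (hker : ∀ j : ℕ, ∃ u : X, u ≠ 0 ∧ T j u = 0) :
    ∃ u₀ : X, u₀ ≠ 0 ∧ T₀ u₀ = 0 := by
  -- normalized kernel elements
  have hu : ∀ j : ℕ, ∃ u : X, ‖u‖ = 1 ∧ T j u = 0 := by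
    intro j
    obtain ⟨v, hv0, hvk⟩ := hker j
    refine ⟨(‖v‖ : ℂ)⁻¹ • v, ?_, ?_⟩
    · rw [norm_smul]
      simp [norm_ne_zero_iff.mpr hv0]
    · rw [map_smul, hvk, smul_zero]
  choose u hu1 huk using hu
  -- ι of the sequence lies in a compact set
  obtain ⟨K, hK, hKsub⟩ :=
    hι.image_closedBall_subset_compact (𝕜₁ := ℂ) (f := (ι : X →ₛₗ[RingHom.id ℂ] Z)) 1
  have hmem : ∀ j, ι (u j) ∈ K := by
    intro j
    exact hKsub ⟨u j, by simp [Metric.mem_closedBall, (hu1 j).le], rfl⟩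
  obtain ⟨z, _, φ, hφmono, hφconv⟩ := hK.tendsto_subseq hmem
  -- the key estimate
  have key : ∀ j k : ℕ, ‖u j - u k‖ ≤
      C * (‖T j - T₀‖ + ‖T k - T₀‖ + ‖ι (u j) - ι (u k)‖) := by
    intro j k
    have h1 := hest j (u j - u k)
    have h2 : ‖T j (u j - u k)‖ ≤ ‖T j - T₀‖ + ‖T k - T₀‖ := by
      have : T j (u j - u k) = (T₀ - T j) (u k) + (T k - T₀) (u k) := by
        simp [map_sub, huk j, huk k]
        abel
      rw [this]
      calc ‖(T₀ - T j) (u k) + (T k - T₀) (u k)‖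
          ≤ ‖(T₀ - T j) (u k)‖ + ‖(T k - T₀) (u k)‖ := norm_add_le _ _
        _ ≤ ‖T₀ - T j‖ * ‖u k‖ + ‖T k - T₀‖ * ‖u k‖ :=
            add_le_add ((T₀ - T j).le_opNorm _) ((T k - T₀).le_opNorm _)
        _ = ‖T j - T₀‖ + ‖T k - T₀‖ := by rw [hu1 k, norm_sub_rev T₀]; ring
    calc ‖u j - u k‖ ≤ C * (‖T j (u j - u k)‖ + ‖ι (u j - u k)‖) := h1
      _ ≤ C * (‖T j - T₀‖ + ‖T k - T₀‖ + ‖ι (u j) - ι (u k)‖) := by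
          have h3 : ι (u j - u k) = ι (u j) - ι (u k) := map_sub ι _ _
          rw [h3]
          exact mul_le_mul_of_nonneg_left (by linarith) hC.le
  -- the subsequence is Cauchy
  have hφconv' : Filter.Tendsto (fun j => ‖T (φ j) - T₀‖) Filter.atTop (nhds 0) :=
    hconv.comp hφmono.tendsto_atTop
  have hcauchyι : CauchySeq (fun j => ι (u (φ j))) := hφconv.cauchySeq
  have hcauchy : CauchySeq (fun j => u (φ j)) := by
    rw [cauchySeq_iff_tendsto_dist_atTop_0]
    have hbound : ∀ p : ℕ × ℕ, dist (u (φ p.1)) (u (φ p.2)) ≤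
        C * (‖T (φ p.1) - T₀‖ + ‖T (φ p.2) - T₀‖ + dist (ι (u (φ p.1))) (ι (u (φ p.2)))) := by
      intro p
      rw [dist_eq_norm, dist_eq_norm]
      exact key (φ p.1) (φ p.2)
    have hdtend : Filter.Tendsto
        (fun p : ℕ × ℕ => C * (‖T (φ p.1) - T₀‖ + ‖T (φ p.2) - T₀‖ +
          dist (ι (u (φ p.1))) (ι (u (φ p.2))))) Filter.atTop (nhds 0) := by
      have h1 : Filter.Tendsto (fun p : ℕ × ℕ => ‖T (φ p.1) - T₀‖) Filter.atTop (nhds 0) := by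
        rw [← Filter.prod_atTop_atTop_eq]
        exact hφconv'.comp Filter.tendsto_fst
      have h2 : Filter.Tendsto (fun p : ℕ × ℕ => ‖T (φ p.2) - T₀‖) Filter.atTop (nhds 0) := by
        rw [← Filter.prod_atTop_atTop_eq]
        exact hφconv'.comp Filter.tendsto_snd
      have h3 : Filter.Tendsto (fun p : ℕ × ℕ =>
          dist (ι (u (φ p.1))) (ι (u (φ p.2)))) Filter.atTop (nhds 0) := by
        rw [cauchySeq_iff_tendsto_dist_atTop_0] at hcauchyι
        exact hcauchyι
      have := ((h1.add h2).add h3).const_mul C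
      simpa using this
    exact squeeze_zero (fun p => dist_nonneg) hbound hdtend
  obtain ⟨u₀, hu₀⟩ := cauchySeq_tendsto_of_complete hcauchy
  refine ⟨u₀, ?_, ?_⟩
  · have : Filter.Tendsto (fun j => ‖u (φ j)‖) Filter.atTop (nhds ‖u₀‖) :=
      (continuous_norm.tendsto u₀).comp hu₀
    have hn : ‖u₀‖ = 1 := by
      have : Filter.Tendsto (fun _ : ℕ => (1 : ℝ)) Filter.atTop (nhds ‖u₀‖) := by
        simpa [hu1] using this
      exact tendsto_nhds_unique this tendsto_const_nhds
    intro h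
    rw [h, norm_zero] at hn
    norm_num at hn
  · -- T₀ u₀ = lim T₀ (u (φ j)) and ‖T₀ (u (φ j))‖ = ‖(T₀ - T (φ j)) (u (φ j))‖ → 0
    have h1 : Filter.Tendsto (fun j => T₀ (u (φ j))) Filter.atTop (nhds (T₀ u₀)) :=
      (T₀.continuous.tendsto u₀).comp hu₀
    have h2 : Filter.Tendsto (fun j => T₀ (u (φ j))) Filter.atTop (nhds 0) := by
      rw [tendsto_zero_iff_norm_tendsto_zero]
      have hb : ∀ j, ‖T₀ (u (φ j))‖ ≤ ‖T (φ j) - T₀‖ := by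
        intro j
        have : T₀ (u (φ j)) = -((T (φ j) - T₀) (u (φ j))) := by
          simp [map_sub, huk (φ j)]
        rw [this, norm_neg]
        calc ‖(T (φ j) - T₀) (u (φ j))‖ ≤ ‖T (φ j) - T₀‖ * ‖u (φ j)‖ :=
              (T (φ j) - T₀).le_opNorm _
          _ = ‖T (φ j) - T₀‖ := by rw [hu1 (φ j), mul_one]
      exact squeeze_zero (fun j => norm_nonneg _) hb hφconv'
    exact tendsto_nhds_unique h1 h2
end

section
/- For every r ∈ ℝ with r² ≠ 1 and all σ, ξ ∈ ℝ, one has the identity (1−r²)^{-1}σ² − (1−r²)(ξ + rσ/(1−r²))² = σ² − 2rσξ − (1−r²)ξ². Consequently, the left-hand side — the dual static de Sitter metric (1−r²)^{-1}∂_{t̃}² − (1−r²)∂_r² written in terms of the momenta (ξ,σ) dual to the coordinates (r, τ) with τ = e^{-t}, t = t̃ − (1/2)log(1−r²) — extends from 0 < r < 1 to the polynomial quadratic form σ² − 2rσξ − (1−r²)ξ² defined for all r ∈ ℝ. Moreover, for every r ∈ ℝ the symmetric 2×2 matrix of this quadratic form in (ξ,σ) has determinant −1; in particular the extended form is nondegenerate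 of signature (1,1) for every r, including at the event horizon r = 1. -/
/-- **Smooth nondegenerate extension of the static de Sitter dual metric across the
event horizon** (Section 4 of the paper). For `r² ≠ 1` the dual static de Sitter
metric, written in the momenta `(ξ,σ)` dual to `(r,τ)` with `τ = e^{-t}`,
`t = t̃ - ½ log(1-r²)`, equals the polynomial quadratic form
`σ² - 2rσξ - (1-r²)ξ²`, which is defined for all `r`; and for every `r` the symmetric
`2×2` matrix representing this quadratic form in `(ξ,σ)` has determinant `-1`, so the
extended form is nondegenerate (of signature `(1,1)`), including at `r = 1`. -/
theorem deSitter_static_metric_extends_nondegenerately :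
    (∀ r σ ξ : ℝ, r ^ 2 ≠ 1 →
      (1 - r ^ 2)⁻¹ * σ ^ 2 - (1 - r ^ 2) * (ξ + r * σ / (1 - r ^ 2)) ^ 2
        = σ ^ 2 - 2 * r * σ * ξ - (1 - r ^ 2) * ξ ^ 2) ∧
    (∀ r : ℝ, ∀ M : Matrix (Fin 2) (Fin 2) ℝ, M.IsSymm →
      (∀ ξ σ : ℝ,
        σ ^ 2 - 2 * r * σ * ξ - (1 - r ^ 2) * ξ ^ 2
          = ∑ i, ∑ j, M i j * ![ξ, σ] i * ![ξ, σ] j) →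
      M.det = -1) := by
  constructor
  · intro r σ ξ h
    have h1 : (1 : ℝ) - r ^ 2 ≠ 0 := fun hc => h (by linarith [sub_eq_zero.mp hc])
    field_simp
    ring
  · intro r M hsym hq
    have h10 : M 1 0 = M 0 1 := by
      have := congrFun (congrFun hsym.eq 1) 0
      simpa [Matrix.transpose_apply] using this.symm
    have e1 := hq 1 0
    have e2 := hq 0 1
    have e3 := hq 1 1
    simp [Fin.sum_univ_two] at e1 e2 e3
    have hdet : M.det = M 0 0 * M 1 1 - M 0 1 * M 1 0 := by
      simp [Matrix.det_fin_two]
    rw [hdet, h10]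
    have h00 : M 0 0 = -(1 - r ^ 2) := by linarith
    have h11 : M 1 1 = 1 := by linarith
    have h01 : M 0 1 = -r := by nlinarith
    rw [h00, h11, h01]; ring
end

section
/- Let z ∈ ℝ with z ≠ 0, let μ ∈ (0,1), set r = √(1−μ), and let ξ ∈ ℝ and h ≥ 0. Suppose z = 2μξ and −4r²μξ² + 4r²zξ + z² − r^{-2}h = 0. Then ξ ≠ 0, h = 4r²μξ², and 4(1−2r²)ξ² − 4zξ − r^{-4}h = −4r^{-2}ξ² < 0; consequently the second derivative of μ along the Hamilton flow of p_{ℏ,z} at such a point equals −8r²μ·(4r^{-2}ξ²) = −32μξ² < 0. -/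
/-- **Convexity of `μ` along the semiclassical Hamilton flow on de Sitter space**
(equation (4.21) of the paper). With `r = √(1-μ)`, `0 < μ < 1`, on the semiclassical
characteristic set (`-4r²μξ² + 4r²zξ + z² - h/r² = 0` with `h = |η|²_ω ≥ 0`), if
`H_{p_{ℏ,z}}μ = 4r²(-2μξ + z)` vanishes (i.e. `z = 2μξ`), then `ξ ≠ 0`,
`h = 4r²μξ²`, `4(1-2r²)ξ² - 4zξ - h/r⁴ = -4ξ²/r²`, and hence
`H²_{p_{ℏ,z}}μ = -8r²μ·(4ξ²/r²) = -32μξ² < 0`. -/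
theorem deSitter_mu_convex_escape (z μ ξ h r : ℝ) (hz : z ≠ 0)
    (hμ : μ ∈ Set.Ioo (0 : ℝ) 1) (hr : r = Real.sqrt (1 - μ)) (hh : 0 ≤ h)
    (h1 : z = 2 * μ * ξ)
    (h2 : -4 * r ^ 2 * μ * ξ ^ 2 + 4 * r ^ 2 * z * ξ + z ^ 2 - h / r ^ 2 = 0) :
    ξ ≠ 0 ∧ h = 4 * r ^ 2 * μ * ξ ^ 2 ∧
    4 * (1 - 2 * r ^ 2) * ξ ^ 2 - 4 * z * ξ - h / r ^ 4 = -4 * ξ ^ 2 / r ^ 2 ∧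
    -8 * r ^ 2 * μ * (4 * ξ ^ 2 / r ^ 2) = -32 * μ * ξ ^ 2 ∧
    -32 * μ * ξ ^ 2 < 0 := by
  obtain ⟨hμ0, hμ1⟩ := hμ
  have hr2 : r ^ 2 = 1 - μ := by
    rw [hr, Real.sq_sqrt (by linarith)]
  have hrpos : 0 < r := by
    rw [hr]; exact Real.sqrt_pos.mpr (by linarith)
  have hrne : r ≠ 0 := ne_of_gt hrpos
  have hξ : ξ ≠ 0 := by
    intro h0; apply hz; rw [h1, h0]; ring
  have hhval : h = 4 * r ^ 2 * μ * ξ ^ 2 := by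
    subst h1
    field_simp at h2
    linear_combination -h2 + 4 * μ * ξ ^ 2 * r ^ 2 * hr2
  refine ⟨hξ, hhval, ?_, by field_simp; ring, ?_⟩
  · subst hhval h1
    field_simp
    rw [show μ = 1 - r ^ 2 by linarith]
    ring
  · have hx : 0 < ξ ^ 2 := by positivity
    nlinarith
end

section
/- Let n ∈ ℕ with n ≥ 2, let σ ∈ ℂ, and let γ : (0,∞) → ℂ be continuous. For u : (0,∞) → ℂ twice continuously differentiable define (Au)(μ) = −4μ²u''(μ) − 4μu'(μ) + 2(n−2+μγ(μ))μu'(μ) − ((n−2)²/4 + σ²)u(μ). Then for every twice continuously differentiable u and every μ > 0, with w(ν) = ν^{−iσ/2 + n/4 − 1/2} (complex powers defined via the real logarithm on (0,∞)), one has μ^{iσ/2 − n/4 − 1/2}·A(w·u)(μ) = −4μu''(μ) + (4iσ − 4 + 2γ(μ)μ)u'(μ) + (−iσγ(μ) + ((n−2)/2)γ(μ))u(μ). -/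
/-- **The conjugation identity for even asymptotically hyperbolic metrics**
(equation (4.26) of the paper). With
`A u (μ) = -4μ²u'' - 4μu' + 2(n-2+μγ(μ))μu' - ((n-2)²/4 + σ²)u` (the radial part of
`Δ_{g₀} - (n-2)²/4 - σ²` in the coordinate `μ = x²`), and
`w(ν) = ν^{-iσ/2 + n/4 - 1/2}` (complex powers via the real logarithm on `(0,∞)`),
for every twice continuously differentiable `u` and every `μ > 0` one has
`μ^{iσ/2 - n/4 - 1/2} · A(w·u)(μ)
  = -4μ u''(μ) + (4iσ - 4 + 2γ(μ)μ) u'(μ) + (-iσγ(μ) + ((n-2)/2)γ(μ)) u(μ)`,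
an operator that continues smoothly and nondegenerately across `μ = 0`. -/
theorem conformally_compact_conjugation_identity
    (n : ℕ) (hn : 2 ≤ n) (σ : ℂ) (γ : ℝ → ℂ)
    (hγ : ContinuousOn γ (Set.Ioi 0))
    (A : (ℝ → ℂ) → ℝ → ℂ)
    (hA : ∀ (v : ℝ → ℂ) (μ : ℝ),
      A v μ = -4 * (μ : ℂ) ^ 2 * deriv (deriv v) μ - 4 * (μ : ℂ) * deriv v μ
        + 2 * ((n : ℂ) - 2 + (μ : ℂ) * γ μ) * (μ : ℂ) * deriv v μ
        - (((n : ℂ) - 2) ^ 2 / 4 + σ ^ 2) * v μ)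
    (w : ℝ → ℂ)
    (hw : ∀ ν : ℝ,
      w ν = Complex.exp ((-(Complex.I * σ) / 2 + (n : ℂ) / 4 - 1 / 2) * Real.log ν))
    (u : ℝ → ℂ) (hu : ContDiffOn ℝ 2 u (Set.Ioi 0)) (μ : ℝ) (hμ : 0 < μ) :
    Complex.exp ((Complex.I * σ / 2 - (n : ℂ) / 4 - 1 / 2) * Real.log μ)
        * A (fun ν => w ν * u ν) μ
      = -4 * (μ : ℂ) * deriv (deriv u) μ
        + (4 * Complex.I * σ - 4 + 2 * γ μ * (μ : ℂ)) * deriv u μ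
        + (-(Complex.I * σ) * γ μ + ((n : ℂ) - 2) / 2 * γ μ) * u μ := by
  have hμ0 : (μ : ℂ) ≠ 0 := by exact_mod_cast hμ.ne'
  set α : ℂ := -(Complex.I * σ) / 2 + (n : ℂ) / 4 - 1 / 2 with hα
  -- derivative of w on (0,∞)
  have hwd : ∀ ν : ℝ, 0 < ν → HasDerivAt w (α * (ν : ℂ)⁻¹ * w ν) ν := by
    intro ν hν
    have h1 : HasDerivAt (fun t : ℝ => Complex.exp (α * Real.log t))
        (Complex.exp (α * Real.log ν) * (α * ((ν⁻¹ : ℝ) : ℂ))) ν :=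
      ((Real.hasDerivAt_log hν.ne').ofReal_comp.const_mul α).cexp
    have hwe : w = fun t : ℝ => Complex.exp (α * Real.log t) := funext hw
    rw [hwe]
    convert h1 using 1
    show α * (ν : ℂ)⁻¹ * Complex.exp (α * Real.log ν) = _
    push_cast
    ring
  -- derivatives of u
  have huD : ∀ ν ∈ Set.Ioi (0:ℝ), HasDerivAt u (deriv u ν) ν := by
    intro ν hν
    exact ((hu.differentiableOn (by norm_num)).differentiableAt
      (isOpen_Ioi.mem_nhds hν)).hasDerivAt
  have hu2 : HasDerivAt (deriv u) (deriv (deriv u) μ) μ := by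
    have h1 : ContDiffOn ℝ 1 (deriv u) (Set.Ioi 0) :=
      hu.deriv_of_isOpen isOpen_Ioi (by norm_num)
    exact ((h1.differentiableOn (by norm_num)).differentiableAt
      (isOpen_Ioi.mem_nhds hμ)).hasDerivAt
  -- first derivative of w·u
  have hwu : ∀ ν ∈ Set.Ioi (0:ℝ), HasDerivAt (fun ν => w ν * u ν)
      (Complex.exp (α * Real.log ν) * (α * (ν : ℂ)⁻¹ * u ν + deriv u ν)) ν := by
    intro ν hν
    have := (hwd ν hν).mul (huD ν hν)
    refine this.congr_deriv ?_
    rw [hw]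
    ring
  have hderiv1 : ∀ ν ∈ Set.Ioi (0:ℝ), deriv (fun ν => w ν * u ν) ν
      = Complex.exp (α * Real.log ν) * (α * (ν : ℂ)⁻¹ * u ν + deriv u ν) :=
    fun ν hν => (hwu ν hν).deriv
  have hEq : deriv (fun ν => w ν * u ν) =ᶠ[nhds μ]
      fun ν => Complex.exp (α * Real.log ν) * (α * (ν : ℂ)⁻¹ * u ν + deriv u ν) :=
    Filter.eventuallyEq_of_mem (isOpen_Ioi.mem_nhds hμ) hderiv1
  -- second derivative
  have hidC : HasDerivAt (fun t : ℝ => (t : ℂ)) 1 μ := (hasDerivAt_id μ).ofReal_comp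
  have hgD : HasDerivAt
      (fun ν => Complex.exp (α * Real.log ν) * (α * (ν : ℂ)⁻¹ * u ν + deriv u ν))
      (Complex.exp (α * Real.log μ) * (α * ((μ⁻¹ : ℝ) : ℂ))
          * (α * (μ : ℂ)⁻¹ * u μ + deriv u μ)
        + Complex.exp (α * Real.log μ)
          * ((α * (-1 / (μ : ℂ) ^ 2)) * u μ + α * (μ : ℂ)⁻¹ * deriv u μ
            + deriv (deriv u) μ)) μ := by
    have hE : HasDerivAt (fun t : ℝ => Complex.exp (α * Real.log t))
        (Complex.exp (α * Real.log μ) * (α * ((μ⁻¹ : ℝ) : ℂ))) μ :=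
      ((Real.hasDerivAt_log hμ.ne').ofReal_comp.const_mul α).cexp
    have hinv : HasDerivAt (fun t : ℝ => (t : ℂ)⁻¹) (-1 / (μ : ℂ) ^ 2) μ := by
      have h2 : HasDerivAt (fun t : ℝ => (t : ℂ)⁻¹) (-((μ : ℂ) ^ 2)⁻¹ * 1) μ :=
        (hasDerivAt_inv hμ0).comp μ hidC
      convert h2 using 1
      field_simp
    have hinner : HasDerivAt (fun t : ℝ => α * (t : ℂ)⁻¹ * u t + deriv u t)
        ((α * (-1 / (μ : ℂ) ^ 2)) * u μ + α * (μ : ℂ)⁻¹ * deriv u μ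
          + deriv (deriv u) μ) μ := by
      have h3 := ((hinv.const_mul α).mul (huD μ hμ)).add hu2
      exact h3
    exact hE.mul hinner
  have hd2 : deriv (deriv (fun ν => w ν * u ν)) μ
      = Complex.exp (α * Real.log μ) * (α * ((μ⁻¹ : ℝ) : ℂ))
          * (α * (μ : ℂ)⁻¹ * u μ + deriv u μ)
        + Complex.exp (α * Real.log μ)
          * ((α * (-1 / (μ : ℂ) ^ 2)) * u μ + α * (μ : ℂ)⁻¹ * deriv u μ
            + deriv (deriv u) μ) := by
    rw [hEq.deriv_eq]
    exact hgD.deriv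
  -- exponential bookkeeping
  have hEne : Complex.exp (α * Real.log μ) ≠ 0 := Complex.exp_ne_zero _
  have key : Complex.exp ((Complex.I * σ / 2 - (n : ℂ) / 4 - 1 / 2) * Real.log μ)
      * Complex.exp (α * Real.log μ) = (μ : ℂ)⁻¹ := by
    rw [← Complex.exp_add]
    have h1 : (Complex.I * σ / 2 - (n : ℂ) / 4 - 1 / 2) * Real.log μ
        + α * Real.log μ = -((Real.log μ : ℝ) : ℂ) := by rw [hα]; ring
    rw [h1, Complex.exp_neg, ← Complex.ofReal_exp, Real.exp_log hμ]
  have hM : Complex.exp ((Complex.I * σ / 2 - (n : ℂ) / 4 - 1 / 2) * Real.log μ)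
      = (μ : ℂ)⁻¹ * (Complex.exp (α * Real.log μ))⁻¹ := by
    rw [← key, mul_assoc, mul_inv_cancel₀ hEne, mul_one]
  -- final algebra
  have hs : σ ^ 2 = -((Complex.I * σ) ^ 2) := by
    rw [mul_pow, Complex.I_sq]; ring
  rw [hA, hd2, hderiv1 μ hμ]
  have hinvcast : ((μ⁻¹ : ℝ) : ℂ) = (μ : ℂ)⁻¹ := by push_cast; ring
  rw [hw μ, hM, hinvcast, mul_assoc, inv_mul_eq_iff_eq_mul₀ hμ0,
    inv_mul_eq_iff_eq_mul₀ hEne, hs, hα]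
  linear_combination (Complex.exp ((-(Complex.I * σ) / 2 + (n : ℂ) / 4 - 1 / 2) * Real.log μ)
      * (-8 * (-(Complex.I * σ) / 2 + (n : ℂ) / 4 - 1 / 2) ^ 2 * u μ
        + 4 * (-(Complex.I * σ) / 2 + (n : ℂ) / 4 - 1 / 2) * u μ
        + 2 * ((n : ℂ) - 2) * (-(Complex.I * σ) / 2 + (n : ℂ) / 4 - 1 / 2) * u μ
        - 8 * (-(Complex.I * σ) / 2 + (n : ℂ) / 4 - 1 / 2) * (μ : ℂ) * deriv u μ
        + 2 * (-(Complex.I * σ) / 2 + (n : ℂ) / 4 - 1 / 2) * γ μ * (μ : ℂ) * u μ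
        + ((μ : ℂ) * (μ : ℂ)⁻¹ - 1)
          * (-4 * (-(Complex.I * σ) / 2 + (n : ℂ) / 4 - 1 / 2) ^ 2 * u μ
            + 4 * (-(Complex.I * σ) / 2 + (n : ℂ) / 4 - 1 / 2) * u μ)))
    * (mul_inv_cancel₀ hμ0)
end

section
/- Let Λ > 0 and r_s > 0, and let μ̃(r) = r²(1 − Λr²/3) − r_s·r (the Kerr–de Sitter function μ̃ with angular momentum α = 0, i.e. the de Sitter–Schwarzschild case). Then there exist real numbers r_-, r_+ with 0 < r_- < r_+, μ̃(r_-) = μ̃(r_+) = 0, μ̃'(r_-) > 0 and μ̃'(r_+) < 0 if and only if (9/4)r_s²Λ < 1. -/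
/-- **Existence of the two event horizons in de Sitter–Schwarzschild space**
(condition (6.1) of the paper at `α = 0`). For `Λ > 0`, `r_s > 0` and
`μ̃(r) = r²(1 - Λr²/3) - r_s r`, the function `μ̃` has two positive roots
`r_- < r_+` with `μ̃'(r_-) > 0` and `μ̃'(r_+) < 0` if and only if
`(9/4) r_s² Λ < 1`. -/
theorem deSitterSchwarzschild_horizons_iff (Λ rs : ℝ) (hΛ : 0 < Λ) (hrs : 0 < rs)
    (μt : ℝ → ℝ) (hμt : ∀ r, μt r = r ^ 2 * (1 - Λ * r ^ 2 / 3) - rs * r) :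
    (∃ rm rp : ℝ, 0 < rm ∧ rm < rp ∧ μt rm = 0 ∧ μt rp = 0 ∧
      0 < deriv μt rm ∧ deriv μt rp < 0) ↔
    (9 / 4) * rs ^ 2 * Λ < 1 := by
  have hfe : μt = fun r => r ^ 2 * (1 - Λ * r ^ 2 / 3) - rs * r := funext hμt
  have hder : ∀ r : ℝ, deriv μt r = 2 * r - 4 / 3 * Λ * r ^ 3 - rs := by
    intro r
    rw [hfe]
    have ha : HasDerivAt (fun r : ℝ => r ^ 2) (2 * r) r := by
      simpa using hasDerivAt_pow 2 r
    have hb : HasDerivAt (fun r : ℝ => 1 - Λ * r ^ 2 / 3) (-(Λ * (2 * r) / 3)) r :=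
      ((ha.const_mul Λ).div_const 3).const_sub 1
    have hc : HasDerivAt (fun r : ℝ => rs * r) (rs * 1) r := (hasDerivAt_id r).const_mul rs
    have hd : HasDerivAt (fun r : ℝ => r ^ 2 * (1 - Λ * r ^ 2 / 3) - rs * r)
        (2 * r - 4 / 3 * Λ * r ^ 3 - rs) r := by
      exact ((ha.mul hb).sub hc).congr_deriv (by ring)
    exact hd.deriv
  constructor
  · rintro ⟨rm, rp, hrm0, hlt, hmroot, hproot, _, _⟩
    have hrp0 : 0 < rp := lt_trans hrm0 hlt
    -- divide out the root equations by r
    have hmr : rm ^ 2 * (1 - Λ * rm ^ 2 / 3) - rs * rm = 0 := by rw [← hμt]; exact hmroot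
    have hpr : rp ^ 2 * (1 - Λ * rp ^ 2 / 3) - rs * rp = 0 := by rw [← hμt]; exact hproot
    have hgm : rm - Λ * rm ^ 3 / 3 - rs = 0 := by
      have h2 : rm * (rm - Λ * rm ^ 3 / 3 - rs) = 0 := by linear_combination hmr
      rcases mul_eq_zero.mp h2 with h' | h'
      · exact absurd h' (ne_of_gt hrm0)
      · exact h'
    have hgp : rp - Λ * rp ^ 3 / 3 - rs = 0 := by
      have h2 : rp * (rp - Λ * rp ^ 3 / 3 - rs) = 0 := by linear_combination hpr
      rcases mul_eq_zero.mp h2 with h' | h'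
      · exact absurd h' (ne_of_gt hrp0)
      · exact h'
    -- Λ (rm² + rm rp + rp²) = 3
    have hv : Λ * (rm ^ 2 + rm * rp + rp ^ 2) = 3 := by
      have h3 : (rm - rp) * (3 - Λ * (rm ^ 2 + rm * rp + rp ^ 2)) = 0 := by
        linear_combination 3 * hgm - 3 * hgp
      rcases mul_eq_zero.mp h3 with h' | h'
      · exact absurd h' (sub_ne_zero.mpr (ne_of_lt hlt))
      · linarith
    -- 3 rs = Λ rm rp (rm + rp)
    have hu : 3 * rs = Λ * rm * rp * (rm + rp) := by
      linear_combination (-3 : ℝ) * hgm - rm * hv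
    set s : ℝ := rm ^ 2 + rm * rp + rp ^ 2 with hs
    have hspos : 0 < s := by positivity
    -- key polynomial inequality
    have key : 27 * rm ^ 2 * rp ^ 2 * (rm + rp) ^ 2 < 4 * s ^ 3 := by
      have hfac : 4 * s ^ 3 - 27 * rm ^ 2 * rp ^ 2 * (rm + rp) ^ 2 =
          (rp - rm) ^ 2 * (4 * rm ^ 4 + 20 * rm ^ 3 * rp + 33 * rm ^ 2 * rp ^ 2 +
            20 * rm * rp ^ 3 + 4 * rp ^ 4) := by rw [hs]; ring
      have h1 : 0 < (rp - rm) ^ 2 := pow_pos (sub_pos.mpr hlt) 2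
      have h2 : 0 < 4 * rm ^ 4 + 20 * rm ^ 3 * rp + 33 * rm ^ 2 * rp ^ 2 +
          20 * rm * rp ^ 3 + 4 * rp ^ 4 := by positivity
      nlinarith [mul_pos h1 h2]
    -- combine
    have hA : 9 * rs ^ 2 * Λ * s ^ 3 = 27 * (rm ^ 2 * rp ^ 2 * (rm + rp) ^ 2) := by
      linear_combination (Λ * s ^ 3 * (3 * rs + Λ * rm * rp * (rm + rp))) * hu +
        (rm ^ 2 * rp ^ 2 * (rm + rp) ^ 2 * ((Λ * s) ^ 2 + 3 * (Λ * s) + 9)) * hv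
    have h4 : 9 * rs ^ 2 * Λ * s ^ 3 < 4 * s ^ 3 := by nlinarith [key, hA]
    have h5 : 9 * rs ^ 2 * Λ < 4 :=
      lt_of_mul_lt_mul_right (by linarith) (le_of_lt (by positivity : (0:ℝ) < s ^ 3)) |>.trans_le
        (le_refl 4)
    linarith
  · intro h
    set r0 : ℝ := Real.sqrt (1 / Λ) with hr0def
    have hr0 : 0 < r0 := Real.sqrt_pos.mpr (by positivity)
    have hr0sq : Λ * r0 ^ 2 = 1 := by
      rw [hr0def, Real.sq_sqrt (by positivity : (0:ℝ) ≤ 1 / Λ)]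
      field_simp
    have hgc : Continuous fun r : ℝ => r - Λ * r ^ 3 / 3 - rs := by fun_prop
    -- value at r0 is positive
    have hgr0 : 0 < r0 - Λ * r0 ^ 3 / 3 - rs := by
      have hrs2 : rs ^ 2 < 4 / 9 * r0 ^ 2 := by nlinarith
      nlinarith [mul_pos hrs hr0]
    have hg0 : (fun r : ℝ => r - Λ * r ^ 3 / 3 - rs) 0 < 0 := by simp; positivity
    have hg3 : (fun r : ℝ => r - Λ * r ^ 3 / 3 - rs) (3 * r0) < 0 := by
      simp only
      nlinarith [hr0sq, mul_pos hr0 hr0]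
    -- IVT on [0, r0]
    obtain ⟨rm, hrm_mem, hgm⟩ :=
      intermediate_value_Ioo (le_of_lt hr0) hgc.continuousOn
        (show (0:ℝ) ∈ Set.Ioo ((fun r : ℝ => r - Λ * r ^ 3 / 3 - rs) 0)
          ((fun r : ℝ => r - Λ * r ^ 3 / 3 - rs) r0) from ⟨hg0, hgr0⟩)
    obtain ⟨rp, hrp_mem, hgp⟩ :=
      intermediate_value_Ioo' (by linarith : r0 ≤ 3 * r0) hgc.continuousOn
        (show (0:ℝ) ∈ Set.Ioo ((fun r : ℝ => r - Λ * r ^ 3 / 3 - rs) (3 * r0))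
          ((fun r : ℝ => r - Λ * r ^ 3 / 3 - rs) r0) from ⟨hg3, hgr0⟩)
    obtain ⟨hrm0, hrmr0⟩ := hrm_mem
    obtain ⟨hr0rp, hrp3⟩ := hrp_mem
    have hgm' : rm - Λ * rm ^ 3 / 3 - rs = 0 := hgm
    have hgp' : rp - Λ * rp ^ 3 / 3 - rs = 0 := hgp
    refine ⟨rm, rp, hrm0, lt_trans hrmr0 hr0rp, ?_, ?_, ?_, ?_⟩
    · rw [hμt]; linear_combination rm * hgm'
    · rw [hμt]; linear_combination rp * hgp'
    · rw [hder]
      have heq : 2 * rm - 4 / 3 * Λ * rm ^ 3 - rs = rm * (1 - Λ * rm ^ 2) := by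
        linear_combination hgm'
      rw [heq]
      have : Λ * rm ^ 2 < 1 := by nlinarith [hr0sq]
      exact mul_pos hrm0 (by linarith)
    · rw [hder]
      have heq : 2 * rp - 4 / 3 * Λ * rp ^ 3 - rs = rp * (1 - Λ * rp ^ 2) := by
        linear_combination hgp'
      rw [heq]
      have hrp0 : 0 < rp := lt_trans hr0 hr0rp
      have : 1 < Λ * rp ^ 2 := by nlinarith [hr0sq]
      exact mul_neg_of_pos_of_neg hrp0 (by linarith)
end

section
/- Let Λ ≥ 0, r_s > 0 and α ∈ ℝ, and let μ̃(r) = (r² + α²)(1 − Λr²/3) − r_s·r. If there exists r₀ > 0 with μ̃'(r₀) > 0, then Λα² < 3, i.e. γ = Λα²/3 < 1. In particular, γ < 1 whenever μ̃ has positive roots r_- < r_+ with μ̃'(r_-) > 0 and μ̃'(r_+) < 0. -/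
/-- **The horizon condition forces `γ = Λα²/3 < 1`** (equation (6.2) of the paper).
For `μ̃(r) = (r² + α²)(1 - Λr²/3) - r_s r`: if `μ̃'(r₀) > 0` for some `r₀ > 0`, then
`Λα² < 3`; in particular `γ = Λα²/3 < 1` whenever `μ̃` has positive roots
`r_- < r_+` with `μ̃'(r_-) > 0` and `μ̃'(r_+) < 0`. -/
theorem kerrDeSitter_gamma_lt_one (Λ rs α : ℝ) (hΛ : 0 ≤ Λ) (hrs : 0 < rs)
    (μt : ℝ → ℝ)
    (hμt : ∀ r, μt r = (r ^ 2 + α ^ 2) * (1 - Λ * r ^ 2 / 3) - rs * r) :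
    ((∃ r₀ : ℝ, 0 < r₀ ∧ 0 < deriv μt r₀) → Λ * α ^ 2 < 3) ∧
    (∀ rm rp : ℝ, 0 < rm → rm < rp → μt rm = 0 → μt rp = 0 →
      0 < deriv μt rm → deriv μt rp < 0 → Λ * α ^ 2 / 3 < 1) := by
  have hfun : μt = fun r => (r ^ 2 + α ^ 2) * (1 - Λ * r ^ 2 / 3) - rs * r :=
    funext hμt
  subst hfun
  have hd : ∀ r : ℝ, deriv (fun r => (r ^ 2 + α ^ 2) * (1 - Λ * r ^ 2 / 3) - rs * r) r
      = 2 * r - 4 * Λ * r ^ 3 / 3 - 2 * Λ * r * α ^ 2 / 3 - rs := by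
    intro r
    have h1 : HasDerivAt (fun r : ℝ => r ^ 2 + α ^ 2) (2 * r) r := by
      simpa using (hasDerivAt_pow 2 r).add_const (α ^ 2)
    have h2 : HasDerivAt (fun r : ℝ => 1 - Λ * r ^ 2 / 3) (-(2 * Λ * r / 3)) r := by
      have := (((hasDerivAt_pow 2 r).const_mul Λ).div_const 3).const_sub 1
      refine this.congr_deriv ?_
      ring
    have h3 : HasDerivAt (fun r : ℝ => rs * r) rs r := by
      simpa using (hasDerivAt_id r).const_mul rs
    have := (h1.mul h2).sub h3
    change deriv (((fun r => r ^ 2 + α ^ 2) * fun r => 1 - Λ * r ^ 2 / 3) - fun r => rs * r) r = _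
    rw [this.deriv]
    ring
  have key : (∃ r₀ : ℝ, 0 < r₀ ∧
      0 < deriv (fun r => (r ^ 2 + α ^ 2) * (1 - Λ * r ^ 2 / 3) - rs * r) r₀) →
      Λ * α ^ 2 < 3 := by
    rintro ⟨r₀, hr₀, hpos⟩
    rw [hd r₀] at hpos
    by_contra h
    push_neg at h
    nlinarith [mul_pos hr₀ hr₀, pow_pos hr₀ 3, sq_nonneg r₀,
      mul_nonneg hΛ (pow_pos hr₀ 3).le, mul_pos hr₀ (mul_pos hr₀ hr₀)]
  refine ⟨key, fun rm rp hrm _ _ _ hdm _ => ?_⟩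
  have := key ⟨rm, hrm, hdm⟩
  linarith
end

section
/- Let Λ ≥ 0, r_s > 0 and α ∈ ℝ with α² < r_s²/4 and (9/4)Λr_s² < 1, and let μ̃(r) = (r² + α²)(1 − Λr²/3) − r_s·r. Suppose 0 < r_- < r_+ satisfy μ̃(r_-) = μ̃(r_+) = 0, μ̃'(r_-) > 0, μ̃'(r_+) < 0, and μ̃ > 0 on (r_-, r_+). Then r_s/2 < r_- < 3r_s/2 < r_+. In particular μ̃(r_s/2) < 0 and μ̃(3r_s/2) = ((9r_s²/4) + α²)(1 − (3/4)Λr_s²) − (3/2)r_s² > 0. -/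
set_option maxHeartbeats 1000000


/-- **Location of the event horizons relative to the photon sphere** (Subsection 6.4
of the paper). For slowly rotating Kerr–de Sitter black holes (`α² < r_s²/4`,
`(9/4)Λr_s² < 1`), with horizons `r_- < r_+` (roots of `μ̃` with the derivative signs
of (6.1)) and `μ̃ > 0` on `(r_-, r_+)`, one has `r_s/2 < r_- < 3r_s/2 < r_+`; in
particular `μ̃(r_s/2) < 0` and
`μ̃(3r_s/2) = ((9r_s²/4) + α²)(1 - (3/4)Λr_s²) - (3/2)r_s² > 0`. -/
theorem kerrDeSitter_horizons_straddle_photon_sphere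
    (Λ rs α rm rp : ℝ) (hΛ : 0 ≤ Λ) (hrs : 0 < rs)
    (hα : α ^ 2 < rs ^ 2 / 4) (hΛrs : (9 / 4) * Λ * rs ^ 2 < 1)
    (μt : ℝ → ℝ)
    (hμt : ∀ r, μt r = (r ^ 2 + α ^ 2) * (1 - Λ * r ^ 2 / 3) - rs * r)
    (hrm : 0 < rm) (hrmrp : rm < rp)
    (h0m : μt rm = 0) (h0p : μt rp = 0)
    (hdm : 0 < deriv μt rm) (hdp : deriv μt rp < 0)
    (hpos : ∀ r ∈ Set.Ioo rm rp, 0 < μt r) :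
    rs / 2 < rm ∧ rm < 3 * rs / 2 ∧ 3 * rs / 2 < rp ∧
    μt (rs / 2) < 0 ∧
    μt (3 * rs / 2)
      = (9 * rs ^ 2 / 4 + α ^ 2) * (1 - (3 / 4) * Λ * rs ^ 2) - (3 / 2) * rs ^ 2 ∧
    0 < μt (3 * rs / 2) := by
  have hfun : μt = fun r => (r ^ 2 + α ^ 2) * (1 - Λ * r ^ 2 / 3) - rs * r := funext hμt
  -- derivative
  have hd : ∀ r : ℝ, HasDerivAt μt
      (2*r*(1 - Λ*r^2/3) - (r^2+α^2)*(2*Λ*r/3) - rs) r := by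
    intro r
    rw [hfun]
    have h1 : HasDerivAt (fun r : ℝ => r^2 + α^2) (2*r) r := by
      simpa using (hasDerivAt_pow 2 r).add_const (α^2)
    have h2 : HasDerivAt (fun r : ℝ => 1 - Λ*r^2/3) (-(2*Λ*r/3)) r := by
      have h := (((hasDerivAt_pow 2 r).const_mul Λ).div_const 3).const_sub 1
      refine h.congr_deriv ?_
      ring
    have h3 : HasDerivAt (fun r : ℝ => rs * r) rs r := by
      simpa using (hasDerivAt_id r).const_mul rs
    have h4 := (h1.mul h2).sub h3
    refine h4.congr_deriv ?_
    ring
  have hDm : 0 < 2*rm*(1 - Λ*rm^2/3) - (rm^2+α^2)*(2*Λ*rm/3) - rs := by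
    rw [← (hd rm).deriv]; exact hdm
  have hDp : 2*rp*(1 - Λ*rp^2/3) - (rp^2+α^2)*(2*Λ*rp/3) - rs < 0 := by
    rw [← (hd rp).deriv]; exact hdp
  have em : (rm ^ 2 + α ^ 2) * (1 - Λ * rm ^ 2 / 3) - rs * rm = 0 := by
    rw [← hμt]; exact h0m
  have ep : (rp ^ 2 + α ^ 2) * (1 - Λ * rp ^ 2 / 3) - rs * rp = 0 := by
    rw [← hμt]; exact h0p
  have hrp : 0 < rp := hrm.trans hrmrp
  -- rs/2 < rm
  have hmlow : rs / 2 < rm := by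
    nlinarith [mul_nonneg hΛ (mul_pos hrm (mul_pos hrm hrm)).le,
      mul_nonneg (mul_nonneg hΛ hrm.le) (sq_nonneg α)]
  -- rm < 3 rs / 2
  have h5 : 0 < (2*rm*(1 - Λ*rm^2/3) - (rm^2+α^2)*(2*Λ*rm/3) - rs) * rm :=
    mul_pos hDm hrm
  have hF : α^2*(1+Λ*rm^2/3) < rm^2*(1-Λ*rm^2) := by nlinarith [h5, em]
  have hΛrm : Λ*rm^2 < 1 := by
    nlinarith [hF, sq_nonneg α, mul_pos hrm hrm, mul_nonneg hΛ (sq_nonneg rm),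
      mul_nonneg (sq_nonneg α) (mul_nonneg hΛ (sq_nonneg rm))]
  have hmhigh : rm < 3 * rs / 2 := by
    have h6 : 0 ≤ α^2 * (3 - Λ*rm^2) :=
      mul_nonneg (sq_nonneg α) (by linarith)
    nlinarith [em, hF, mul_pos hrm hrm]
  -- μt (rs/2) < 0
  have hneg : μt (rs / 2) < 0 := by
    rw [hμt]
    have h1 : 0 ≤ (rs^2/4 + α^2) * (Λ * rs^2) :=
      mul_nonneg (by positivity) (mul_nonneg hΛ (sq_nonneg rs))
    nlinarith [h1]
  -- μt (3rs/2) value and positivity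
  have heq : μt (3 * rs / 2)
      = (9 * rs ^ 2 / 4 + α ^ 2) * (1 - (3 / 4) * Λ * rs ^ 2) - (3 / 2) * rs ^ 2 := by
    rw [hμt]; ring
  have hposx : 0 < μt (3 * rs / 2) := by
    rw [heq]
    have h1 : Λ * rs^2 < 4/9 := by nlinarith
    nlinarith [mul_pos (show (0:ℝ) < 4/9 - Λ*rs^2 by linarith) (mul_pos hrs hrs),
      mul_nonneg (show (0:ℝ) ≤ 4/9 - Λ*rs^2 by linarith) (sq_nonneg α)]
  -- Vieta-style relations
  set k : ℝ := 1 - Λ*α^2/3 - Λ/3*((rm+rp)^2 - rm*rp) with hk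
  have hne : rm - rp ≠ 0 := sub_ne_zero.mpr (ne_of_lt hrmrp)
  have h1 : (rm - rp) * (rm*rp*k - α^2) = 0 := by
    rw [hk]; linear_combination rp * em - rm * ep
  have hK1 : rm*rp*k - α^2 = 0 := by
    rcases mul_eq_zero.mp h1 with h | h
    · exact absurd h hne
    · exact h
  have h2 : (rm - rp) * ((rm+rp)*(k + Λ/3*(rm*rp)) - rs) = 0 := by
    rw [hk]; linear_combination em - ep
  have hK2 : (rm+rp)*(k + Λ/3*(rm*rp)) - rs = 0 := by
    rcases mul_eq_zero.mp h2 with h | h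
    · exact absurd h hne
    · exact h
  -- g(rp) < 0
  have hgid : 2*rp*(1 - Λ*rp^2/3) - (rp^2+α^2)*(2*Λ*rp/3) - rs
      = (rp - rm) * (-(Λ/3)*rp^2 - Λ/3*(rm+rp)*rp + k) := by
    linear_combination (-(2*rp))*hk + hK2
  have hgp : -(Λ/3)*rp^2 - Λ/3*(rm+rp)*rp + k < 0 := by
    by_contra h
    push_neg at h
    nlinarith [mul_nonneg (show (0:ℝ) ≤ rp - rm by linarith) h, hgid, hDp]
  -- 3 rs / 2 < rp
  have hphigh : 3 * rs / 2 < rp := by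
    by_contra h
    push_neg at h
    rcases eq_or_lt_of_le h with h' | h'
    · rw [← h'] at hposx; rw [h0p] at hposx; exact lt_irrefl 0 hposx
    · set x : ℝ := 3 * rs / 2 with hx
      have hfx : μt x = (x - rm) * (x - rp) * (-(Λ/3)*x^2 - Λ/3*(rm+rp)*x + k) := by
        rw [hμt]; linear_combination (-(x^2))*hk + x*hK2 - hK1
      have hgx : -(Λ/3)*x^2 - Λ/3*(rm+rp)*x + k < 0 := by
        nlinarith [mul_nonneg hΛ (mul_nonneg (show (0:ℝ) ≤ x - rp by linarith)
          (show (0:ℝ) ≤ x + rp by linarith)),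
          mul_nonneg (mul_nonneg hΛ (show (0:ℝ) ≤ rm + rp by linarith))
          (show (0:ℝ) ≤ x - rp by linarith)]
      have : μt x < 0 := by
        rw [hfx]
        exact mul_neg_of_pos_of_neg
          (mul_pos (by linarith) (by linarith)) hgx
      linarith [hposx]
  exact ⟨hmlow, hmhigh, hphigh, hneg, heq, hposx⟩
end

section
/- Let γ ∈ [0,1), α, μ̃, ξ, η, ζ ∈ ℝ with ξ ≠ 0, and θ ∈ (0,π); set κ = 1 + γcos²θ. If μ̃ξ² + κη² + ((1+γ)²/(κ sin²θ))ζ² = 2(1+γ)αξζ, then μ̃ ≤ α². -/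
/-- **The classical characteristic set lies in `μ̃ ≤ α²`** (estimate (6.8) of the
paper). If `γ ∈ [0,1)`, `ξ ≠ 0`, `θ ∈ (0,π)`, `κ = 1 + γcos²θ`, and
`μ̃ξ² + κη² + ((1+γ)²/(κ sin²θ))ζ² = 2(1+γ)αξζ` (i.e. the point lies on the
characteristic set of the Kerr–de Sitter principal symbol), then `μ̃ ≤ α²`. -/
theorem kerrDeSitter_char_set_mu_le (γ α μt ξ η ζ θ : ℝ)
    (hγ0 : 0 ≤ γ) (hγ1 : γ < 1) (hξ : ξ ≠ 0)
    (hθ : θ ∈ Set.Ioo 0 Real.pi)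
    (κ : ℝ) (hκ : κ = 1 + γ * Real.cos θ ^ 2)
    (hchar : μt * ξ ^ 2 + κ * η ^ 2
        + (1 + γ) ^ 2 / (κ * Real.sin θ ^ 2) * ζ ^ 2
      = 2 * (1 + γ) * α * ξ * ζ) :
    μt ≤ α ^ 2 := by
  have hs : 0 < Real.sin θ := Real.sin_pos_of_pos_of_lt_pi hθ.1 hθ.2
  have hpyth : Real.sin θ ^ 2 + Real.cos θ ^ 2 = 1 := Real.sin_sq_add_cos_sq θ
  have hκpos : 0 < κ := by nlinarith [sq_nonneg (Real.cos θ)]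
  have hden : 0 < κ * Real.sin θ ^ 2 := by positivity
  have hle1 : κ * Real.sin θ ^ 2 ≤ 1 := by
    nlinarith [sq_nonneg (Real.cos θ * Real.sin θ), sq_nonneg (Real.cos θ)]
  have hdiv : (1 + γ) ^ 2 ≤ (1 + γ) ^ 2 / (κ * Real.sin θ ^ 2) := by
    rw [le_div_iff₀ hden]
    nlinarith [sq_nonneg (1 + γ)]
  have hξ2 : 0 < ξ ^ 2 := by positivity
  have key : μt * ξ ^ 2 ≤ α ^ 2 * ξ ^ 2 := by
    nlinarith [sq_nonneg (α * ξ - (1 + γ) * ζ), sq_nonneg η, sq_nonneg ζ,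
      mul_le_mul_of_nonneg_right hdiv (sq_nonneg ζ)]
  nlinarith [key]
end

section
/- Let Λ ≥ 0, r_s > 0, α ∈ ℝ, γ = Λα²/3, and μ̃(r) = (r² + α²)(1 − Λr²/3) − r_s·r. Define, for r > 0, θ ∈ (0,π) and (ξ,η,ζ) ∈ ℝ³, p(r,θ,ξ,η,ζ) = −μ̃(r)ξ² + 2(1+γ)αξζ − (1+γcos²θ)η² − ((1+γ)²/((1+γcos²θ)sin²θ))ζ². Suppose r₀ > 0 satisfies μ̃'(r₀) = 0 and μ̃(r₀) = α². Then for every ξ₀ ≠ 0, at the point (r₀, π/2, ξ₀, 0, αξ₀/(1+γ)) one has p = 0 and all five partial derivatives ∂_r p, ∂_θ p, ∂_ξ p, ∂_η p, ∂_ζ p vanish; that is, the point lies on the characteristic set and the Hamilton vector field of p vanishes there, so the bicharacteristic through it is stationary. -/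
/-- **Stationary bicharacteristics for fast rotation** (justifying restriction (6.9)
of the paper). If `μ̃'(r₀) = 0` and `μ̃(r₀) = α²` at some `r₀ > 0`, then for every
`ξ₀ ≠ 0` the point `(r₀, π/2, ξ₀, 0, αξ₀/(1+γ))` lies on the characteristic set
`{p = 0}` and all five partial derivatives of `p` vanish there, i.e. the Hamilton
vector field of `p` vanishes and the bicharacteristic through the point is
stationary. -/
theorem kerrDeSitter_stationary_point_of_fast_rotation
    (Λ rs α : ℝ) (hΛ : 0 ≤ Λ) (hrs : 0 < rs)
    (γ : ℝ) (hγ : γ = Λ * α ^ 2 / 3)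
    (μt : ℝ → ℝ)
    (hμt : ∀ r, μt r = (r ^ 2 + α ^ 2) * (1 - Λ * r ^ 2 / 3) - rs * r)
    (p : ℝ → ℝ → ℝ → ℝ → ℝ → ℝ)
    (hp : ∀ r θ ξ η ζ, p r θ ξ η ζ =
      -μt r * ξ ^ 2 + 2 * (1 + γ) * α * ξ * ζ
        - (1 + γ * Real.cos θ ^ 2) * η ^ 2
        - (1 + γ) ^ 2 / ((1 + γ * Real.cos θ ^ 2) * Real.sin θ ^ 2) * ζ ^ 2)
    (r₀ : ℝ) (hr₀ : 0 < r₀) (hcrit : deriv μt r₀ = 0) (hμr₀ : μt r₀ = α ^ 2)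
    (ξ₀ : ℝ) (hξ₀ : ξ₀ ≠ 0) :
    p r₀ (Real.pi / 2) ξ₀ 0 (α * ξ₀ / (1 + γ)) = 0 ∧
    deriv (fun r => p r (Real.pi / 2) ξ₀ 0 (α * ξ₀ / (1 + γ))) r₀ = 0 ∧
    deriv (fun θ => p r₀ θ ξ₀ 0 (α * ξ₀ / (1 + γ))) (Real.pi / 2) = 0 ∧
    deriv (fun ξ => p r₀ (Real.pi / 2) ξ 0 (α * ξ₀ / (1 + γ))) ξ₀ = 0 ∧
    deriv (fun η => p r₀ (Real.pi / 2) ξ₀ η (α * ξ₀ / (1 + γ))) 0 = 0 ∧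
    deriv (fun ζ => p r₀ (Real.pi / 2) ξ₀ 0 ζ) (α * ξ₀ / (1 + γ)) = 0 := by
  have hγ0 : 0 ≤ γ := by rw [hγ]; positivity
  have h1γ : (1 : ℝ) + γ ≠ 0 := by positivity
  have hcos : Real.cos (Real.pi / 2) = 0 := Real.cos_pi_div_two
  have hsin : Real.sin (Real.pi / 2) = 1 := Real.sin_pi_div_two
  -- differentiability of μt
  have hμfun : μt = fun r => (r ^ 2 + α ^ 2) * (1 - Λ * r ^ 2 / 3) - rs * r := funext hμt
  have hμdiff : DifferentiableAt ℝ μt r₀ := by rw [hμfun]; fun_prop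
  have hμd : HasDerivAt μt 0 r₀ := by
    have := hμdiff.hasDerivAt
    rwa [hcrit] at this
  refine ⟨?_, ?_, ?_, ?_, ?_, ?_⟩
  · rw [hp, hμr₀, hcos, hsin]
    field_simp
    ring
  · simp only [hp]
    have H := (((hμd.neg.mul_const (ξ₀ ^ 2)).add_const
        (2 * (1 + γ) * α * ξ₀ * (α * ξ₀ / (1 + γ)))).sub_const
        ((1 + γ * Real.cos (Real.pi / 2) ^ 2) * 0 ^ 2)).sub_const
        ((1 + γ) ^ 2 / ((1 + γ * Real.cos (Real.pi / 2) ^ 2) * Real.sin (Real.pi / 2) ^ 2)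
          * (α * ξ₀ / (1 + γ)) ^ 2)
    erw [H.deriv]; ring
  · simp only [hp]
    set c := α * ξ₀ / (1 + γ) with hc
    have hA : HasDerivAt (fun θ => 1 + γ * Real.cos θ ^ 2)
        (γ * ((2 : ℕ) * Real.cos (Real.pi / 2) ^ 1 * -Real.sin (Real.pi / 2)))
        (Real.pi / 2) :=
      (((Real.hasDerivAt_cos _).pow 2).const_mul γ).const_add 1
    have hS : HasDerivAt (fun θ => Real.sin θ ^ 2)
        ((2 : ℕ) * Real.sin (Real.pi / 2) ^ 1 * Real.cos (Real.pi / 2)) (Real.pi / 2) :=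
      (Real.hasDerivAt_sin _).pow 2
    have hB := hA.mul hS
    have hBne : (1 + γ * Real.cos (Real.pi / 2) ^ 2) * Real.sin (Real.pi / 2) ^ 2 ≠ 0 := by
      rw [hcos, hsin]; norm_num
    have hQ := (hasDerivAt_const (Real.pi / 2) ((1 + γ) ^ 2)).div hB hBne
    have H := ((((hA.mul_const ((0:ℝ) ^ 2)).const_sub
        (-μt r₀ * ξ₀ ^ 2 + 2 * (1 + γ) * α * ξ₀ * c)).sub (hQ.mul_const (c ^ 2))))
    erw [H.deriv]; simp only [Pi.mul_apply, hcos, hsin]; ring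
  · simp only [hp]
    have H := ((((hasDerivAt_pow 2 ξ₀).const_mul (-μt r₀)).add
        (((hasDerivAt_id' (x := ξ₀)).const_mul (2 * (1 + γ) * α)).mul_const (α * ξ₀ / (1 + γ)))).sub_const
        ((1 + γ * Real.cos (Real.pi / 2) ^ 2) * 0 ^ 2)).sub_const
        ((1 + γ) ^ 2 / ((1 + γ * Real.cos (Real.pi / 2) ^ 2) * Real.sin (Real.pi / 2) ^ 2)
          * (α * ξ₀ / (1 + γ)) ^ 2)
    erw [H.deriv]; rw [hμr₀]
    field_simp
    ring
  · simp only [hp]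
    have H := ((((hasDerivAt_pow 2 (0:ℝ)).const_mul
        (1 + γ * Real.cos (Real.pi / 2) ^ 2)).const_sub
        (-μt r₀ * ξ₀ ^ 2 + 2 * (1 + γ) * α * ξ₀ * (α * ξ₀ / (1 + γ)))).sub_const
        ((1 + γ) ^ 2 / ((1 + γ * Real.cos (Real.pi / 2) ^ 2) * Real.sin (Real.pi / 2) ^ 2)
          * (α * ξ₀ / (1 + γ)) ^ 2))
    rw [H.deriv]; ring
  · simp only [hp]
    set c := α * ξ₀ / (1 + γ) with hc
    have H := ((((hasDerivAt_id' (x := c)).const_mul (2 * (1 + γ) * α * ξ₀)).const_add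
        (-μt r₀ * ξ₀ ^ 2)).sub_const
        ((1 + γ * Real.cos (Real.pi / 2) ^ 2) * 0 ^ 2)).sub
        ((hasDerivAt_pow 2 c).const_mul
          ((1 + γ) ^ 2 / ((1 + γ * Real.cos (Real.pi / 2) ^ 2) * Real.sin (Real.pi / 2) ^ 2)))
    erw [H.deriv]; rw [hcos, hsin, hc]
    norm_num
    field_simp
    ring
end

section
/- Let Λ ≥ 0, r_s > 0, α ∈ ℝ, γ = Λα²/3, μ̃(r) = (r² + α²)(1 − Λr²/3) − r_s·r, and fix z > 0, r > 0 with μ̃(r) ≤ 0, θ ∈ (0,π), and (ξ,η,ζ) ∈ ℝ³. Set κ = 1 + γcos²θ, g = (r²+α²)z − αζ and p̃ = κη² + ((1+γ)²/(κ sin²θ))(ζ − α sin²θ·z)². If μ̃(r)ξ + (1+γ)g = 0, then −μ̃(r)ξ² − 2(1+γ)gξ − p̃ < 0. -/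
/-- **No semiclassical radial critical points at or beyond the event horizons**
(Subsection 6.4 of the paper). For real `z > 0`, at a point with `μ̃ ≤ 0` where
`H_{p_{ℏ,z}} r = -2(μ̃ξ + (1+γ)g)` vanishes (`g = (r²+α²)z - αζ`), the semiclassical
symbol `p_{ℏ,z} = -μ̃ξ² - 2(1+γ)gξ - p̃_{ℏ,z}` is strictly negative; i.e.
`H_{p_{ℏ,z}} r` cannot vanish on the semiclassical characteristic set in `μ̃ ≤ 0`. -/
theorem kerrDeSitter_no_radial_critical_beyond_horizon
    (Λ rs α : ℝ) (hΛ : 0 ≤ Λ) (hrs : 0 < rs)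
    (γ : ℝ) (hγ : γ = Λ * α ^ 2 / 3)
    (z r θ ξ η ζ : ℝ) (hz : 0 < z) (hr : 0 < r)
    (hθ : θ ∈ Set.Ioo 0 Real.pi)
    (μt κ g pt : ℝ)
    (hμt : μt = (r ^ 2 + α ^ 2) * (1 - Λ * r ^ 2 / 3) - rs * r)
    (hμtle : μt ≤ 0)
    (hκ : κ = 1 + γ * Real.cos θ ^ 2)
    (hg : g = (r ^ 2 + α ^ 2) * z - α * ζ)
    (hpt : pt = κ * η ^ 2
      + (1 + γ) ^ 2 / (κ * Real.sin θ ^ 2) * (ζ - α * Real.sin θ ^ 2 * z) ^ 2)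
    (hzero : μt * ξ + (1 + γ) * g = 0) :
    -μt * ξ ^ 2 - 2 * (1 + γ) * g * ξ - pt < 0 := by
  obtain ⟨hθ1, hθ2⟩ := hθ
  have hsin : 0 < Real.sin θ := Real.sin_pos_of_pos_of_lt_pi hθ1 hθ2
  have hγ0 : 0 ≤ γ := by rw [hγ]; positivity
  have hκ0 : 0 < κ := by
    rw [hκ]; nlinarith [sq_nonneg (Real.cos θ), mul_nonneg hγ0 (sq_nonneg (Real.cos θ))]
  have h1γ : 0 < 1 + γ := by linarith
  have key : -μt * ξ ^ 2 - 2 * (1 + γ) * g * ξ - pt = μt * ξ ^ 2 - pt := by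
    linear_combination (-2 * ξ) * hzero
  rw [key]
  have hfrac : 0 < (1 + γ) ^ 2 / (κ * Real.sin θ ^ 2) := by positivity
  rcases eq_or_ne ζ (α * Real.sin θ ^ 2 * z) with hζ | hζ
  · have hpc : Real.sin θ ^ 2 + Real.cos θ ^ 2 = 1 := Real.sin_sq_add_cos_sq θ
    have hgeq : g = r ^ 2 * z + (α * Real.cos θ) ^ 2 * z := by
      rw [hg, hζ]; linear_combination (-(α ^ 2 * z)) * hpc
    have hgpos : 0 < g := by rw [hgeq]; positivity
    have hpt0 : 0 ≤ pt := by
      rw [hpt]; positivity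
    have hmξ : μt * ξ < 0 := by nlinarith [mul_pos h1γ hgpos]
    have hμtne : μt < 0 := by
      rcases lt_or_eq_of_le hμtle with h | h
      · exact h
      · exfalso; rw [h, zero_mul] at hmξ; exact lt_irrefl 0 hmξ
    have hξne : ξ ≠ 0 := by
      intro h; rw [h, mul_zero] at hmξ; exact lt_irrefl 0 hmξ
    have hξ2 : 0 < ξ ^ 2 := lt_of_le_of_ne (sq_nonneg ξ) (Ne.symm (pow_ne_zero 2 hξne))
    have hneg : μt * ξ ^ 2 < 0 := mul_neg_of_neg_of_pos hμtne hξ2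
    linarith
  · have h2 : 0 < (1 + γ) ^ 2 / (κ * Real.sin θ ^ 2) * (ζ - α * Real.sin θ ^ 2 * z) ^ 2 := by
      have : (ζ - α * Real.sin θ ^ 2 * z) ≠ 0 := sub_ne_zero.mpr hζ
      positivity
    have hpt0 : 0 < pt := by
      rw [hpt]
      have h3 := mul_nonneg hκ0.le (sq_nonneg η)
      linarith
    have h4 := mul_nonpos_of_nonpos_of_nonneg hμtle (sq_nonneg ξ)
    linarith
end

section
/- Let Λ ≥ 0, r_s > 0 and α ∈ ℝ with α² < 3r_s²/16, and let μ̃(r) = (r² + α²)(1 − Λr²/3) − r_s·r. Suppose r_s/2 ≤ r_- < r_+ with μ̃(r_-) = μ̃(r_+) = 0 and μ̃ > 0 on (r_-, r_+). Fix z ∈ ℝ with z ≠ 0 and ζ ∈ ℝ, and define F : (r_-, r_+) → ℝ by F(r) = ((r²+α²)z − αζ)² / μ̃(r). Then: (i) every r ∈ (r_-, r_+) with F'(r) = 0 satisfies F''(r) > 0, i.e. all critical points of F are nondegenerate local minima; and (ii) if moreover (r_-²+α²)z ≠ αζ and (r_+²+α²)z ≠ αζ, then F tends to +∞ at both endpoints,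 F has exactly one critical point r_c ∈ (r_-, r_+), and F' < 0 on (r_-, r_c) while F' > 0 on (r_c, r_+). -/
open Set Filter Topology

noncomputable def kmu (Λ rs α : ℝ) : ℝ → ℝ :=
  fun r => (r ^ 2 + α ^ 2) * (1 - Λ * r ^ 2 / 3) - rs * r

noncomputable def kmud (Λ rs α : ℝ) : ℝ → ℝ :=
  fun r => 2 * r - 4 * Λ * r ^ 3 / 3 - 2 * Λ * α ^ 2 * r / 3 - rs

noncomputable def kmudd (Λ α : ℝ) : ℝ → ℝ :=
  fun r => 2 - 4 * Λ * r ^ 2 - 2 * Λ * α ^ 2 / 3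

noncomputable def kg (α z ζ : ℝ) : ℝ → ℝ :=
  fun r => (r ^ 2 + α ^ 2) * z - α * ζ

noncomputable def kN (Λ rs α z ζ : ℝ) : ℝ → ℝ :=
  fun r => 2 * kg α z ζ r * (2 * r * z) * kmu Λ rs α r - (kg α z ζ r) ^ 2 * kmud Λ rs α r

noncomputable def kND (Λ rs α z ζ : ℝ) : ℝ → ℝ :=
  fun r => 8 * r ^ 2 * z ^ 2 * kmu Λ rs α r + 4 * z * kg α z ζ r * kmu Λ rs α r
    - (kg α z ζ r) ^ 2 * kmudd Λ α r

lemma kg_hasDeriv (α z ζ : ℝ) (r : ℝ) : HasDerivAt (kg α z ζ) (2 * r * z) r := by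
  have h1 : HasDerivAt (fun x : ℝ => x ^ 2 + α ^ 2) (2 * r) r := by
    simpa using (hasDerivAt_pow 2 r).add_const (α ^ 2)
  have h2 := (h1.mul_const z).sub_const (α * ζ)
  exact h2

lemma kmu_hasDeriv (Λ rs α : ℝ) (r : ℝ) : HasDerivAt (kmu Λ rs α) (kmud Λ rs α r) r := by
  have h1 : HasDerivAt (fun x : ℝ => x ^ 2 + α ^ 2) (2 * r) r := by
    simpa using (hasDerivAt_pow 2 r).add_const (α ^ 2)
  have h2 : HasDerivAt (fun x : ℝ => 1 - Λ * x ^ 2 / 3) (-(Λ * (2 * r) / 3)) r := by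
    have h := (((hasDerivAt_pow 2 r).const_mul Λ).div_const 3).const_sub 1
    exact h.congr_deriv (by norm_num)
  have h3 := (h1.mul h2).sub ((hasDerivAt_id r).const_mul rs)
  refine h3.congr_deriv ?_
  simp only [kmud]
  ring

lemma kmud_hasDeriv (Λ rs α : ℝ) (r : ℝ) : HasDerivAt (kmud Λ rs α) (kmudd Λ α r) r := by
  have h1 := (hasDerivAt_id r).const_mul (2 : ℝ)
  have h2 := ((hasDerivAt_pow 3 r).const_mul (4 * Λ)).div_const 3
  have h3 := (((hasDerivAt_id r).const_mul (2 * Λ * α ^ 2)).div_const 3)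
  have h4 := ((h1.sub h2).sub h3).sub_const rs
  refine h4.congr_deriv ?_
  simp only [kmudd]
  push_cast
  ring

lemma kN_hasDeriv (Λ rs α z ζ : ℝ) (r : ℝ) :
    HasDerivAt (kN Λ rs α z ζ) (kND Λ rs α z ζ r) r := by
  have hg := kg_hasDeriv α z ζ r
  have hμ := kmu_hasDeriv Λ rs α r
  have hμd := kmud_hasDeriv Λ rs α r
  have hlin : HasDerivAt (fun x : ℝ => 2 * x * z) (2 * z) r := by
    simpa [mul_assoc] using ((hasDerivAt_id r).const_mul (2 : ℝ)).mul_const z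
  have h3 := (((hg.const_mul 2).mul hlin).mul hμ).sub ((hg.pow 2).mul hμd)
  refine h3.congr_deriv ?_
  simp only [kND, kN, kg, kmu, kmud, kmudd, Pi.mul_apply, Pi.pow_apply]
  push_cast
  ring

lemma kN_continuous (Λ rs α z ζ : ℝ) : Continuous (kN Λ rs α z ζ) :=
  (Differentiable.continuous fun x => (kN_hasDeriv Λ rs α z ζ x).differentiableAt)

lemma kmu_continuous (Λ rs α : ℝ) : Continuous (kmu Λ rs α) :=
  (Differentiable.continuous fun x => (kmu_hasDeriv Λ rs α x).differentiableAt)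

lemma kg_continuous (α z ζ : ℝ) : Continuous (kg α z ζ) :=
  (Differentiable.continuous fun x => (kg_hasDeriv α z ζ x).differentiableAt)

/-- Core positivity: at a critical point (`kN r = 0`) with `μ > 0`, `r > rs/2`,
the derivative `kND r` of `kN` is positive. -/
lemma kND_pos (Λ rs α z ζ : ℝ) (hrs : 0 < rs) (hα : α ^ 2 < 3 * rs ^ 2 / 16)
    (hz : z ≠ 0) {r : ℝ} (hr : rs / 2 < r) (hm : 0 < kmu Λ rs α r)
    (hcrit : kN Λ rs α z ζ r = 0) : 0 < kND Λ rs α z ζ r := by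
  have hr0 : 0 < r := lt_trans (by positivity) hr
  have hz2 : 0 < z ^ 2 := lt_of_le_of_ne (sq_nonneg z) (Ne.symm (pow_ne_zero 2 hz))
  simp only [kN] at hcrit
  simp only [kND]
  set m := kmu Λ rs α r with hmdef
  set md := kmud Λ rs α r with hmddef
  set mdd := kmudd Λ α r with hmdddef
  set G := kg α z ζ r with hGdef
  have hId : r ^ 2 * mdd - 5 * r * md + 8 * m + 3 * rs * r - 8 * α ^ 2 = 0 := by
    simp only [hmdef, hmddef, hmdddef, kmu, kmud, kmudd]
    ring
  have hfac : G * (4 * r * z * m - G * md) = 0 := by linear_combination hcrit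
  have h3rs : 0 < 3 * rs * r - 8 * α ^ 2 := by nlinarith [mul_pos hrs (sub_pos.mpr hr)]
  rcases mul_eq_zero.mp hfac with hG0 | hC
  · rw [hG0]
    nlinarith [mul_pos (mul_pos (pow_pos hr0 2) hz2) hm]
  · have hC' : 4 * r * z * m - G * md = 0 := hC
    have hmd : md ≠ 0 := by
      intro h
      have h4 : r * z * m = 0 := by linear_combination hC' / 4 + G * h / 4
      exact (mul_ne_zero (mul_ne_zero hr0.ne' hz) hm.ne') h4
    have key : (8 * r ^ 2 * z ^ 2 * m + 4 * z * G * m - G ^ 2 * mdd) * (md ^ 2 * r)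
        = 8 * r * z ^ 2 * m * ((r * md - 4 * m) ^ 2 + 2 * m * (3 * rs * r - 8 * α ^ 2)) := by
      linear_combination
        (-(4 * r * z * m * md - 8 * r ^ 2 * m * z * mdd - r * mdd * (G * md - 4 * r * z * m))) * hC'
        + (-(16 * r * z ^ 2 * m ^ 2)) * hId
    have h2 : 0 < (r * md - 4 * m) ^ 2 + 2 * m * (3 * rs * r - 8 * α ^ 2) := by
      nlinarith [sq_nonneg (r * md - 4 * m), mul_pos hm h3rs]
    have h1 : 0 < 8 * r * z ^ 2 * m := by nlinarith [mul_pos (mul_pos hr0 hz2) hm]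
    have hq := mul_pos h1 h2
    have hp : 0 < md ^ 2 * r :=
      mul_pos (lt_of_le_of_ne (sq_nonneg md) (Ne.symm (pow_ne_zero 2 hmd))) hr0
    nlinarith [key, hq, hp]

/-- Near a zero with positive derivative, the slope is positive. -/
lemma kds_local_sign {N : ℝ → ℝ} {r d : ℝ} (h : HasDerivAt N d r) (h0 : N r = 0)
    (hd : 0 < d) : ∀ᶠ x in 𝓝[≠] r, 0 < N x / (x - r) := by
  have ht := hasDerivAt_iff_tendsto_slope.mp h
  have h2 := ht.eventually (eventually_gt_nhds hd)
  refine h2.mono fun x hx => ?_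
  rwa [slope_def_field, h0, sub_zero] at hx

/-- A continuous function whose zeros (in `Ioo a b`) all have positive local slope
cannot go from positive to negative. -/
lemma kds_no_crossing {N : ℝ → ℝ} (hN : Continuous N) {a b : ℝ}
    (hsign : ∀ r ∈ Set.Ioo a b, N r = 0 → ∀ᶠ x in 𝓝[≠] r, 0 < N x / (x - r))
    {u v : ℝ} (hu : u ∈ Set.Ioo a b) (hv : v ∈ Set.Ioo a b) (huv : u < v)
    (hNu : 0 < N u) (hNv : N v < 0) : False := by
  set s : Set ℝ := Set.Icc u v ∩ {t | N t ≤ 0} with hs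
  have hne : s.Nonempty := ⟨v, ⟨huv.le, le_refl v⟩, hNv.le⟩
  have hbdd : BddBelow s := ⟨u, fun t ht => ht.1.1⟩
  have hcl : IsClosed s := isClosed_Icc.inter (isClosed_le hN continuous_const)
  have hmem := hcl.csInf_mem hne hbdd
  set c := sInf s with hc
  obtain ⟨⟨hucle, hcv⟩, hNc⟩ := hmem
  have huc : u < c := by
    refine hucle.lt_of_ne fun h => ?_
    rw [← h] at hNc
    exact absurd hNc (not_le.mpr hNu)
  have hleft : ∀ t, u ≤ t → t < c → 0 < N t := by
    intro t h1 h2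
    by_contra h
    push_neg at h
    exact absurd (csInf_le hbdd ⟨⟨h1, h2.le.trans hcv⟩, h⟩) (not_le.mpr h2)
  have hNc0 : N c = 0 := by
    refine le_antisymm hNc ?_
    have htd : Tendsto N (𝓝[<] c) (𝓝 (N c)) := (hN.tendsto c).mono_left nhdsWithin_le_nhds
    refine ge_of_tendsto htd ?_
    filter_upwards [Ioo_mem_nhdsLT_of_mem (Set.mem_Ioc.mpr ⟨huc, le_refl c⟩)] with t ht
    exact (hleft t ht.1.le ht.2).le
  have hcmem : c ∈ Set.Ioo a b := ⟨hu.1.trans_le hucle, hcv.trans_lt hv.2⟩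
  have hev := hsign c hcmem hNc0
  have hev' : ∀ᶠ x in 𝓝[<] c, 0 < N x / (x - c) :=
    hev.filter_mono (nhdsWithin_mono c fun x hx => ne_of_lt hx)
  have hev2 : ∀ᶠ x in 𝓝[<] c, x ∈ Set.Ioo u c :=
    Ioo_mem_nhdsLT_of_mem (Set.mem_Ioc.mpr ⟨huc, le_refl c⟩)
  obtain ⟨x, hx1, hx2⟩ := (hev'.and hev2).exists
  have hxneg : N x < 0 := by
    rcases div_pos_iff.mp hx1 with ⟨p, q⟩ | ⟨p, q⟩
    · linarith [sub_pos.mp q, hx2.2]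
    · exact p
  exact absurd (hleft x hx2.1.le hx2.2) (not_lt.mpr hxneg.le)

/-- **Hyperbolicity of the semiclassical trapping for `|α| < (√3/4) r_s`**
(Subsection 6.4 of the paper). With `F(r) = ((r²+α²)z - αζ)²/μ̃(r)` on `(r_-, r_+)`:
(i) every critical point of `F` is a nondegenerate local minimum (`F' = 0 ⟹ F'' > 0`);
and (ii) if `(r_±² + α²)z ≠ αζ` then `F → +∞` at both endpoints, `F` has exactly one
critical point `r_c` in `(r_-, r_+)`, with `F' < 0` on `(r_-, r_c)` and `F' > 0` on
`(r_c, r_+)`. -/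
theorem kerrDeSitter_trapping_function_unique_min
    (Λ rs α rm rp : ℝ) (hΛ : 0 ≤ Λ) (hrs : 0 < rs)
    (hα : α ^ 2 < 3 * rs ^ 2 / 16)
    (μt : ℝ → ℝ)
    (hμt : ∀ r, μt r = (r ^ 2 + α ^ 2) * (1 - Λ * r ^ 2 / 3) - rs * r)
    (hrm : rs / 2 ≤ rm) (hrmrp : rm < rp)
    (h0m : μt rm = 0) (h0p : μt rp = 0)
    (hpos : ∀ r ∈ Set.Ioo rm rp, 0 < μt r)
    (z ζ : ℝ) (hz : z ≠ 0)
    (F : ℝ → ℝ)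
    (hF : ∀ r, F r = ((r ^ 2 + α ^ 2) * z - α * ζ) ^ 2 / μt r) :
    (∀ r ∈ Set.Ioo rm rp, deriv F r = 0 → 0 < deriv (deriv F) r) ∧
    ((rm ^ 2 + α ^ 2) * z ≠ α * ζ → (rp ^ 2 + α ^ 2) * z ≠ α * ζ →
      Filter.Tendsto F (nhdsWithin rm (Set.Ioo rm rp)) Filter.atTop ∧
      Filter.Tendsto F (nhdsWithin rp (Set.Ioo rm rp)) Filter.atTop ∧
      ∃ rc ∈ Set.Ioo rm rp, deriv F rc = 0 ∧
        (∀ r ∈ Set.Ioo rm rp, deriv F r = 0 → r = rc) ∧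
        (∀ r ∈ Set.Ioo rm rp, r < rc → deriv F r < 0) ∧
        (∀ r ∈ Set.Ioo rm rp, rc < r → 0 < deriv F r)) := by
  have hμfun : μt = kmu Λ rs α := funext hμt
  subst hμfun
  have hFfun : F = fun r => (kg α z ζ r) ^ 2 / kmu Λ rs α r := funext hF
  subst hFfun
  have hrm0 : 0 < rm := lt_of_lt_of_le (half_pos hrs) hrm
  -- first derivative
  have hFderiv : ∀ r ∈ Set.Ioo rm rp,
      HasDerivAt (fun r => (kg α z ζ r) ^ 2 / kmu Λ rs α r)
        (kN Λ rs α z ζ r / (kmu Λ rs α r) ^ 2) r := by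
    intro r hr
    have hne := (hpos r hr).ne'
    have h := ((kg_hasDeriv α z ζ r).pow 2).div (kmu_hasDeriv Λ rs α r) hne
    refine h.congr_deriv ?_
    simp only [kN, Pi.pow_apply]
    push_cast
    ring
  have hdF : ∀ r ∈ Set.Ioo rm rp,
      deriv (fun r => (kg α z ζ r) ^ 2 / kmu Λ rs α r) r
        = kN Λ rs α z ζ r / (kmu Λ rs α r) ^ 2 := fun r hr => (hFderiv r hr).deriv
  have hNzero : ∀ r ∈ Set.Ioo rm rp,
      deriv (fun r => (kg α z ζ r) ^ 2 / kmu Λ rs α r) r = 0 → kN Λ rs α z ζ r = 0 := by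
    intro r hr h
    have h2 := hdF r hr
    rw [h] at h2
    rcases div_eq_zero_iff.mp h2.symm with h1 | h1
    · exact h1
    · exact absurd h1 (pow_ne_zero 2 (hpos r hr).ne')
  -- part (i)
  have part1 : ∀ r ∈ Set.Ioo rm rp,
      deriv (fun r => (kg α z ζ r) ^ 2 / kmu Λ rs α r) r = 0 →
      0 < deriv (deriv (fun r => (kg α z ζ r) ^ 2 / kmu Λ rs α r)) r := by
    intro r hr hcrit
    have hm := hpos r hr
    have hN0 := hNzero r hr hcrit
    have hEq : deriv (fun r => (kg α z ζ r) ^ 2 / kmu Λ rs α r)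
        =ᶠ[𝓝 r] fun x => kN Λ rs α z ζ x / (kmu Λ rs α x) ^ 2 :=
      Filter.eventuallyEq_of_mem (isOpen_Ioo.mem_nhds hr) hdF
    have hD2 := (kN_hasDeriv Λ rs α z ζ r).div ((kmu_hasDeriv Λ rs α r).pow 2)
      (pow_ne_zero 2 hm.ne')
    rw [hEq.deriv_eq, show (fun x => kN Λ rs α z ζ x / kmu Λ rs α x ^ 2) = kN Λ rs α z ζ / kmu Λ rs α ^ 2 from rfl, hD2.deriv, hN0, zero_mul, sub_zero]
    have hND := kND_pos Λ rs α z ζ hrs hα hz (lt_of_le_of_lt hrm hr.1) hm hN0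
    exact div_pos (mul_pos hND (pow_pos hm 2)) (pow_pos (pow_pos hm 2) 2)
  refine ⟨part1, fun hgm hgp => ?_⟩
  have hgcont := kg_continuous α z ζ
  have hμcont := kmu_continuous Λ rs α
  have hNcont := kN_continuous Λ rs α z ζ
  -- endpoint blow-up
  have hblow : ∀ e : ℝ, kmu Λ rs α e = 0 → kg α z ζ e ≠ 0 →
      Tendsto (fun r => (kg α z ζ r) ^ 2 / kmu Λ rs α r) (𝓝[Set.Ioo rm rp] e) atTop := by
    intro e h0 hge
    have h1 : Tendsto (kmu Λ rs α) (𝓝[Set.Ioo rm rp] e) (𝓝[>] 0) := by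
      apply tendsto_nhdsWithin_of_tendsto_nhds_of_eventually_within
      · have h := hμcont.tendsto e
        rw [h0] at h
        exact h.mono_left nhdsWithin_le_nhds
      · filter_upwards [self_mem_nhdsWithin] with x hx using hpos x hx
    have h2 : Tendsto (fun x => (kmu Λ rs α x)⁻¹) (𝓝[Set.Ioo rm rp] e) atTop :=
      h1.inv_tendsto_nhdsGT_zero
    have h3 : Tendsto (fun x => (kg α z ζ x) ^ 2) (𝓝[Set.Ioo rm rp] e) (𝓝 ((kg α z ζ e) ^ 2)) :=
      ((hgcont.pow 2).tendsto e).mono_left nhdsWithin_le_nhds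
    have h4 : 0 < (kg α z ζ e) ^ 2 := lt_of_le_of_ne (sq_nonneg _) (Ne.symm (pow_ne_zero 2 hge))
    have h5 := Filter.Tendsto.pos_mul_atTop h4 h3 h2
    simpa [div_eq_mul_inv] using h5
  have hgrm : kg α z ζ rm ≠ 0 := sub_ne_zero.mpr hgm
  have hgrp : kg α z ζ rp ≠ 0 := sub_ne_zero.mpr hgp
  have httm := hblow rm h0m hgrm
  have http := hblow rp h0p hgrp
  refine ⟨httm, http, ?_⟩
  -- existence of a critical point via a compact minimum
  set Fn := fun r => (kg α z ζ r) ^ 2 / kmu Λ rs α r with hFndef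
  set r0 := (rm + rp) / 2 with hr0def
  have hr0mem : r0 ∈ Set.Ioo rm rp := ⟨by simp only [hr0def]; linarith, by simp only [hr0def]; linarith⟩
  have hevm : ∀ᶠ x in 𝓝[>] rm, Fn r0 < Fn x := by
    have h := httm.eventually (eventually_gt_atTop (Fn r0))
    rwa [nhdsWithin_Ioo_eq_nhdsGT hrmrp] at h
  have hevp : ∀ᶠ x in 𝓝[<] rp, Fn r0 < Fn x := by
    have h := http.eventually (eventually_gt_atTop (Fn r0))
    rwa [nhdsWithin_Ioo_eq_nhdsLT hrmrp] at h
  obtain ⟨a, ha, haS⟩ := mem_nhdsGT_iff_exists_Ioo_subset.mp hevm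
  obtain ⟨b, hb, hbS⟩ := mem_nhdsLT_iff_exists_Ioo_subset.mp hevp
  set a' := min a r0 with ha'def
  set b' := max b r0 with hb'def
  have ha'1 : rm < a' := lt_min ha hr0mem.1
  have ha'r0 : a' ≤ r0 := min_le_right _ _
  have hb'1 : b' < rp := max_lt hb hr0mem.2
  have hr0b' : r0 ≤ b' := le_max_right _ _
  have hmA : ∀ x, rm < x → x < a' → Fn r0 < Fn x := fun x h1 h2 =>
    haS ⟨h1, h2.trans_le (min_le_left _ _)⟩
  have hmB : ∀ x, b' < x → x < rp → Fn r0 < Fn x := fun x h1 h2 =>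
    hbS ⟨lt_of_le_of_lt (le_max_left _ _) h1, h2⟩
  have hKsub : Set.Icc a' b' ⊆ Set.Ioo rm rp := fun x hx =>
    ⟨ha'1.trans_le hx.1, hx.2.trans_lt hb'1⟩
  have hFcont : ContinuousOn Fn (Set.Icc a' b') := by
    apply ContinuousOn.div ((hgcont.pow 2).continuousOn) (hμcont.continuousOn)
    exact fun x hx => (hpos x (hKsub hx)).ne'
  obtain ⟨c, hcK, hcmin⟩ := (isCompact_Icc).exists_isMinOn ⟨r0, ha'r0, hr0b'⟩ hFcont
  have hcIoo : c ∈ Set.Ioo rm rp := hKsub hcK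
  have hminIoo : ∀ x ∈ Set.Ioo rm rp, Fn c ≤ Fn x := by
    intro x hx
    rcases lt_or_ge x a' with h | h
    · exact le_of_lt (lt_of_le_of_lt (hcmin ⟨ha'r0, hr0b'⟩) (hmA x hx.1 h))
    · rcases le_or_gt x b' with h2 | h2
      · exact hcmin ⟨h, h2⟩
      · exact le_of_lt (lt_of_le_of_lt (hcmin ⟨ha'r0, hr0b'⟩) (hmB x h2 hx.2))
  have hlocal : IsLocalMin Fn c := by
    apply IsMinOn.isLocalMin _ (isOpen_Ioo.mem_nhds hcIoo)
    intro x hx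
    exact hminIoo x hx
  have hcderiv : deriv Fn c = 0 := hlocal.deriv_eq_zero
  have hcN : kN Λ rs α z ζ c = 0 := hNzero c hcIoo hcderiv
  -- slope-sign machinery
  have hsign : ∀ r ∈ Set.Ioo rm rp, kN Λ rs α z ζ r = 0 →
      ∀ᶠ x in 𝓝[≠] r, 0 < kN Λ rs α z ζ x / (x - r) := fun r hr h0 =>
    kds_local_sign (kN_hasDeriv Λ rs α z ζ r) h0
      (kND_pos Λ rs α z ζ hrs hα hz (lt_of_le_of_lt hrm hr.1) (hpos r hr) h0)
  have hleft : ∀ x ∈ Set.Ioo rm rp, x < c → kN Λ rs α z ζ x < 0 := by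
    intro x hx hxc
    by_contra hcon
    push_neg at hcon
    have hev := hsign c hcIoo hcN
    have hev' : ∀ᶠ t in 𝓝[<] c, 0 < kN Λ rs α z ζ t / (t - c) :=
      hev.filter_mono (nhdsWithin_mono c fun t ht => ne_of_lt ht)
    have hev2 : ∀ᶠ t in 𝓝[<] c, t ∈ Set.Ioo x c :=
      Ioo_mem_nhdsLT_of_mem (Set.mem_Ioc.mpr ⟨hxc, le_refl c⟩)
    obtain ⟨y, hy1, hy2⟩ := (hev'.and hev2).exists
    have hyneg : kN Λ rs α z ζ y < 0 := by
      rcases div_pos_iff.mp hy1 with ⟨p, q⟩ | ⟨p, q⟩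
      · linarith [sub_pos.mp q, hy2.2]
      · exact p
    have hymem : y ∈ Set.Ioo rm rp := ⟨hx.1.trans hy2.1, hy2.2.trans hcIoo.2⟩
    rcases eq_or_lt_of_le hcon with h0 | hpos0
    · have hevx := hsign x hx h0.symm
      have hevx' : ∀ᶠ t in 𝓝[>] x, 0 < kN Λ rs α z ζ t / (t - x) :=
        hevx.filter_mono (nhdsWithin_mono x fun t ht => ne_of_gt ht)
      have hevx2 : ∀ᶠ t in 𝓝[>] x, t ∈ Set.Ioo x y :=
        Ioo_mem_nhdsGT_of_mem (Set.mem_Ico.mpr ⟨le_refl x, hy2.1⟩)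
      obtain ⟨x', hx'1, hx'2⟩ := (hevx'.and hevx2).exists
      have hx'pos : 0 < kN Λ rs α z ζ x' := by
        rcases div_pos_iff.mp hx'1 with ⟨p, q⟩ | ⟨p, q⟩
        · exact p
        · linarith [sub_neg.mp q, hx'2.1]
      have hx'mem : x' ∈ Set.Ioo rm rp :=
        ⟨hx.1.trans hx'2.1, (hx'2.2.trans hy2.2).trans hcIoo.2⟩
      exact kds_no_crossing hNcont hsign hx'mem hymem hx'2.2 hx'pos hyneg
    · exact kds_no_crossing hNcont hsign hx hymem hy2.1 hpos0 hyneg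
  have hright : ∀ x ∈ Set.Ioo rm rp, c < x → 0 < kN Λ rs α z ζ x := by
    intro x hx hcx
    by_contra hcon
    push_neg at hcon
    have hev := hsign c hcIoo hcN
    have hev' : ∀ᶠ t in 𝓝[>] c, 0 < kN Λ rs α z ζ t / (t - c) :=
      hev.filter_mono (nhdsWithin_mono c fun t ht => ne_of_gt ht)
    have hev2 : ∀ᶠ t in 𝓝[>] c, t ∈ Set.Ioo c x :=
      Ioo_mem_nhdsGT_of_mem (Set.mem_Ico.mpr ⟨le_refl c, hcx⟩)
    obtain ⟨y, hy1, hy2⟩ := (hev'.and hev2).exists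
    have hypos : 0 < kN Λ rs α z ζ y := by
      rcases div_pos_iff.mp hy1 with ⟨p, q⟩ | ⟨p, q⟩
      · exact p
      · linarith [sub_neg.mp q, hy2.1]
    have hymem : y ∈ Set.Ioo rm rp := ⟨hcIoo.1.trans hy2.1, hy2.2.trans hx.2⟩
    rcases eq_or_lt_of_le hcon with h0 | hneg0
    · have hevx := hsign x hx h0
      have hevx' : ∀ᶠ t in 𝓝[<] x, 0 < kN Λ rs α z ζ t / (t - x) :=
        hevx.filter_mono (nhdsWithin_mono x fun t ht => ne_of_lt ht)
      have hevx2 : ∀ᶠ t in 𝓝[<] x, t ∈ Set.Ioo y x :=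
        Ioo_mem_nhdsLT_of_mem (Set.mem_Ioc.mpr ⟨hy2.2, le_refl x⟩)
      obtain ⟨x', hx'1, hx'2⟩ := (hevx'.and hevx2).exists
      have hx'neg : kN Λ rs α z ζ x' < 0 := by
        rcases div_pos_iff.mp hx'1 with ⟨p, q⟩ | ⟨p, q⟩
        · linarith [sub_pos.mp q, hx'2.2]
        · exact p
      have hx'mem : x' ∈ Set.Ioo rm rp :=
        ⟨hcIoo.1.trans (hy2.1.trans hx'2.1), hx'2.2.trans hx.2⟩
      exact kds_no_crossing hNcont hsign hymem hx'mem hx'2.1 hypos hx'neg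
    · exact kds_no_crossing hNcont hsign hymem hx hy2.2 hypos hneg0
  refine ⟨c, hcIoo, hcderiv, ?_, ?_, ?_⟩
  · intro r hr hdr
    by_contra hne
    have hN0 := hNzero r hr hdr
    rcases lt_or_gt_of_ne hne with h | h
    · exact absurd hN0 (ne_of_lt (hleft r hr h))
    · exact absurd hN0 (ne_of_gt (hright r hr h))
  · intro r hr hrc
    rw [hdF r hr]
    exact div_neg_of_neg_of_pos (hleft r hr hrc) (pow_pos (hpos r hr) 2)
  · intro r hr hrc
    rw [hdF r hr]
    exact div_pos (hright r hr hrc) (pow_pos (hpos r hr) 2)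
end

section
/- Let r ∈ ℝ, θ ∈ (0,π), α ∈ ℝ, γ > −1, c ∈ ℝ and μ̃ ∈ ℝ be arbitrary, with ρ² := r² + α²cos²θ > 0, and set κ = 1 + γcos²θ. Consider the quadratic form on ℝ⁴ in the variables (ξ,σ,η,ζ): Q(ξ,σ,η,ζ) = −μ̃(ξ+cσ)² − 2(1+γ)(r²+α²)(ξ+cσ)σ + 2(1+γ)α(ξ+cσ)ζ − κη² − ((1+γ)²/(κ sin²θ))(ζ − α sin²θ·σ)². Then the determinant of the symmetric 4×4 matrix representing Q equals −(1+γ)⁴ρ⁴ / sin²θ. In particular Q is a nondegenerate quadratic form for every value of μ̃ — including μ̃ = 0, the event horizons — and for every value of c. -/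
set_option maxHeartbeats 1000000 in
theorem det_fin_four' {R : Type*} [CommRing R] (a b c d e f g h i j k l m n o p : R) :
    (!![a,b,c,d; e,f,g,h; i,j,k,l; m,n,o,p] : Matrix (Fin 4) (Fin 4) R).det =
      a*f*k*p - a*f*l*o - a*g*j*p + a*g*l*n + a*h*j*o - a*h*k*n
      - b*e*k*p + b*e*l*o + b*g*i*p - b*g*l*m - b*h*i*o + b*h*k*m
      + c*e*j*p - c*e*l*n - c*f*i*p + c*f*l*m + c*h*i*n - c*h*j*m
      - d*e*j*o + d*e*k*n + d*f*i*o - d*f*k*m - d*g*i*n + d*g*j*m := by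
  simp [Matrix.det_succ_row_zero, Fin.sum_univ_succ,
    show ((1:Fin 4).succAbove 2) = 3 from rfl, show ((2:Fin 4).succAbove 2) = 3 from rfl,
    show (Fin.castSucc (2 : Fin 3) : Fin 4) = 2 from rfl, show ((3:Fin 4).succAbove 2) = 2 from rfl]
  ring


/-- **The Kerr–de Sitter dual metric extends nondegenerately across the event
horizons** (Subsection 6.1 of the paper). The quadratic form `Q` in `(ξ,σ,η,ζ)`
representing `ρ²G` in the coordinates `(t, r, θ, φ)` satisfies: its symmetric `4×4`
representing matrix has determinant `-(1+γ)⁴ρ⁴/sin²θ`; in particular `Q` is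
nondegenerate for every value of `μ̃` (including `μ̃ = 0`, the event horizons) and of
`c`. -/
theorem kerrDeSitter_metric_nondegenerate
    (r θ α γ c μt : ℝ) (hθ : θ ∈ Set.Ioo 0 Real.pi)
    (hγ : -1 < γ) (hρ : 0 < r ^ 2 + α ^ 2 * Real.cos θ ^ 2)
    (κ : ℝ) (hκ : κ = 1 + γ * Real.cos θ ^ 2)
    (Q : ℝ → ℝ → ℝ → ℝ → ℝ)
    (hQ : ∀ ξ σ η ζ, Q ξ σ η ζ =
      -μt * (ξ + c * σ) ^ 2
        - 2 * (1 + γ) * (r ^ 2 + α ^ 2) * (ξ + c * σ) * σ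
        + 2 * (1 + γ) * α * (ξ + c * σ) * ζ
        - κ * η ^ 2
        - (1 + γ) ^ 2 / (κ * Real.sin θ ^ 2) * (ζ - α * Real.sin θ ^ 2 * σ) ^ 2)
    (M : Matrix (Fin 4) (Fin 4) ℝ) (hsymm : M.IsSymm)
    (hrep : ∀ v : Fin 4 → ℝ,
      ∑ i, ∑ j, M i j * v i * v j = Q (v 0) (v 1) (v 2) (v 3)) :
    M.det = -(1 + γ) ^ 4 * (r ^ 2 + α ^ 2 * Real.cos θ ^ 2) ^ 2 / Real.sin θ ^ 2 ∧
    M.det ≠ 0 := by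
  have hs : Real.sin θ ≠ 0 := (Real.sin_pos_of_pos_of_lt_pi hθ.1 hθ.2).ne'
  have hpyth := Real.sin_sq_add_cos_sq θ
  have hs2 : (0:ℝ) < Real.sin θ ^ 2 := by positivity
  have hκ0 : 0 < κ := by nlinarith [sq_nonneg (Real.cos θ), sq_nonneg (Real.sin θ)]
  have hγ0 : (0:ℝ) < 1 + γ := by linarith
  have hsym : ∀ i j, M j i = M i j := fun i j => hsymm.apply i j
  have e0 := hrep ![1,0,0,0]
  have e1 := hrep ![0,1,0,0]
  have e2 := hrep ![0,0,1,0]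
  have e3 := hrep ![0,0,0,1]
  have e01 := hrep ![1,1,0,0]
  have e02 := hrep ![1,0,1,0]
  have e03 := hrep ![1,0,0,1]
  have e12 := hrep ![0,1,1,0]
  have e13 := hrep ![0,1,0,1]
  have e23 := hrep ![0,0,1,1]
  simp only [Fin.sum_univ_four, Matrix.cons_val_zero, Matrix.cons_val_one,
    Matrix.head_cons, Matrix.cons_val_two, Matrix.tail_cons, Matrix.cons_val_three,
    hQ, mul_zero, mul_one, zero_mul, add_zero, zero_add] at e0 e1 e2 e3 e01 e02 e03 e12 e13 e23
  set D := (1 + γ) ^ 2 / (κ * Real.sin θ ^ 2) with hD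
  have h10 := hsym 0 1
  have h20 := hsym 0 2
  have h30 := hsym 0 3
  have h21 := hsym 1 2
  have h31 := hsym 1 3
  have h32 := hsym 2 3
  have m00 : M 0 0 = -μt := by linear_combination e0
  have m11 : M 1 1 = -μt * c^2 - 2*(1+γ)*(r^2+α^2)*c - D * (α * Real.sin θ^2)^2 := by
    linear_combination e1
  have m22 : M 2 2 = -κ := by linear_combination e2
  have m33 : M 3 3 = -D := by linear_combination e3
  have m01 : M 0 1 = -μt * c - (1+γ)*(r^2+α^2) := by
    linear_combination (e01 - e0 - e1 - h10)/2
  have m02 : M 0 2 = 0 := by linear_combination (e02 - e0 - e2 - h20)/2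
  have m03 : M 0 3 = (1+γ)*α := by linear_combination (e03 - e0 - e3 - h30)/2
  have m12 : M 1 2 = 0 := by linear_combination (e12 - e1 - e2 - h21)/2
  have m13 : M 1 3 = (1+γ)*α*c + D * (α * Real.sin θ^2) := by
    linear_combination (e13 - e1 - e3 - h31)/2
  have m23 : M 2 3 = 0 := by linear_combination (e23 - e2 - e3 - h32)/2
  have hM : M = !![M 0 0, M 0 1, M 0 2, M 0 3; M 1 0, M 1 1, M 1 2, M 1 3;
      M 2 0, M 2 1, M 2 2, M 2 3; M 3 0, M 3 1, M 3 2, M 3 3] := by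
    ext i j
    fin_cases i <;> fin_cases j <;> rfl
  have hdet : M.det = -(1 + γ) ^ 4 * (r ^ 2 + α ^ 2 * Real.cos θ ^ 2) ^ 2 / Real.sin θ ^ 2 := by
    have step1 : M.det = -(κ * D) *
        ((1+γ)*(r^2+α^2) - (1+γ)*α*(α*Real.sin θ^2))^2 := by
      rw [hM, det_fin_four', h10, h20, h30, h21, h31, h32, m00, m11, m22, m33,
        m01, m02, m03, m12, m13, m23]
      ring
    have hcos : Real.cos θ ^ 2 = 1 - Real.sin θ ^ 2 := by linarith
    rw [step1, hD, hcos]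
    field_simp
    ring
  refine ⟨hdet, hdet ▸ ?_⟩
  apply div_ne_zero _ (by positivity)
  have : (0:ℝ) < (1 + γ) ^ 4 * (r ^ 2 + α ^ 2 * Real.cos θ ^ 2) ^ 2 := by positivity
  linarith
end

section
/- Let Λ ≥ 0, r_s > 0, α ∈ ℝ, γ = Λα²/3, and let μ̃(r) = (r² + α²)(1 − Λr²/3) − r_s·r. For every r > 0 with μ̃(r) > 0: (i) (r²+α²)² > μ̃(r)·α²; and (ii) the number c = −(1+γ)(r²+α²)/μ̃(r) satisfies μ̃(r)c² + 2c(1+γ)(r²+α²) + α²(1+γ)² < 0. -/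
/-- **Time-like character of `dτ/τ` in `μ̃ > 0` for the natural choice of `c`**
(inequality (6.12) of the paper). For every `r > 0` with `μ̃(r) > 0`:
(i) `(r²+α²)² > μ̃(r)·α²`; and (ii) `c = -(1+γ)(r²+α²)/μ̃(r)` satisfies
`μ̃(r)c² + 2c(1+γ)(r²+α²) + α²(1+γ)² < 0`. -/
theorem kerrDeSitter_timelike_choice
    (Λ rs α : ℝ) (hΛ : 0 ≤ Λ) (hrs : 0 < rs)
    (γ : ℝ) (hγ : γ = Λ * α ^ 2 / 3)
    (μt : ℝ → ℝ)
    (hμt : ∀ r', μt r' = (r' ^ 2 + α ^ 2) * (1 - Λ * r' ^ 2 / 3) - rs * r')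
    (r : ℝ) (hr : 0 < r) (hμ : 0 < μt r) :
    μt r * α ^ 2 < (r ^ 2 + α ^ 2) ^ 2 ∧
    ∀ c : ℝ, c = -(1 + γ) * (r ^ 2 + α ^ 2) / μt r →
      μt r * c ^ 2 + 2 * c * (1 + γ) * (r ^ 2 + α ^ 2) + α ^ 2 * (1 + γ) ^ 2 < 0 := by
  have hrr : (0:ℝ) < r ^ 2 + α ^ 2 := by positivity
  have hμr := hμt r
  have h1 : μt r * α ^ 2 < (r ^ 2 + α ^ 2) ^ 2 := by
    nlinarith [mul_pos hrr (pow_pos hr 2),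
      mul_nonneg (mul_nonneg hΛ (sq_nonneg r)) (mul_nonneg (sq_nonneg α) hrr.le),
      mul_nonneg (sq_nonneg α) (mul_pos hrs hr).le]
  refine ⟨h1, fun c hc => ?_⟩
  have hγ0 : 0 < 1 + γ := by
    have : 0 ≤ γ := by rw [hγ]; positivity
    linarith
  have hμne : μt r ≠ 0 := ne_of_gt hμ
  rw [hc]
  have key : μt r * (-(1 + γ) * (r ^ 2 + α ^ 2) / μt r) ^ 2 +
      2 * (-(1 + γ) * (r ^ 2 + α ^ 2) / μt r) * (1 + γ) * (r ^ 2 + α ^ 2) +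
      α ^ 2 * (1 + γ) ^ 2
      = (1 + γ) ^ 2 * (α ^ 2 * μt r - (r ^ 2 + α ^ 2) ^ 2) / μt r := by
    field_simp
    ring
  rw [key]
  apply div_neg_of_neg_of_pos _ hμ
  have : α ^ 2 * μt r - (r ^ 2 + α ^ 2) ^ 2 < 0 := by nlinarith
  nlinarith [sq_nonneg (1 + γ), mul_pos hγ0 hγ0]
end
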